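/- arXiv:1309.5649 — 11 statements merged into one kernel-verified Lean document; each statement's English description precedes it below -/
import Mathlib

section
/- Let D be a directed set and F a functor from D to commutative rings such that each transition map F(d ≤ d') is faithfully flat and each F(d) is coherent. Then the colimit colim_D F is a coherent ring. -/
/-- A commutative ring is *coherent* if the kernel of every homomorphism between finitely
generated free modules is finitely generated. -/
def IsCoherentRing (A : Type*) [CommRing A] : Prop :=
  ∀ (n m : ℕ) (f : (Fin n → A) →ₗ[A] (Fin m → A)), (LinearMap.ker f).FG

/-!
A map between finite free modules over the colimit `A` is given by a matrix whose finitely many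
entries all come from one stage `G i`, i.e. it is the base change of a matrix `M₀` over `G i`.
The colimit `A` is flat over `G i`: a linear relation in `A` already holds in some `G j`, where
flatness of `G j` over `G i` makes it trivial, and trivial relations survive in `A`. Since flat
base change preserves kernels, the kernel over `A` is generated by the kernel of `M₀`, which is
finitely generated because `G i` is coherent.
-/

open TensorProduct

theorem Submodule.FG.span_image_of_tower {R S M N : Type*} [CommSemiring R] [Semiring S]
    [Algebra R S] [AddCommMonoid M] [Module R M] [AddCommMonoid N] [Module R N] [Module S N]
    [IsScalarTower R S N] {K : Submodule R M} (hK : K.FG) (ψ : M →ₗ[R] N) :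
    (span S (ψ '' K)).FG := by
  obtain ⟨T, rfl⟩ := hK
  rw [← Submodule.map_coe, Submodule.map_span, Submodule.span_span_of_tower]
  exact Submodule.fg_span (T.finite_toSet.image _)

namespace Matrix

variable {R S : Type*} [CommRing R] [CommRing S] [Algebra R S]
  {m n : Type*} [Fintype m] [DecidableEq m] [Fintype n] [DecidableEq n]

lemma piScalarRight_lTensor_mulVecLin (M : Matrix m n R) (z : S ⊗[R] (n → R)) :
    piScalarRight R S S m (AlgebraTensorModule.lTensor S S M.mulVecLin z) =
      (M.map (algebraMap R S)).mulVecLin (piScalarRight R S S n z) := by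
  induction z using TensorProduct.induction_on with
  | zero => simp
  | tmul s v =>
    ext t
    simp [mulVec, dotProduct, Finset.sum_mul, Algebra.smul_def, mul_assoc]
  | add x y hx hy => simp only [map_add, hx, hy]

theorem ker_mulVecLin_map_algebraMap [Module.Flat R S] (M : Matrix m n R) :
    LinearMap.ker (M.map (algebraMap R S)).mulVecLin =
      Submodule.span S ((Algebra.linearMap R S).compLeft n '' LinearMap.ker M.mulVecLin) := by
  set eN := piScalarRight R S S n
  have hM : (M.map (algebraMap R S)).mulVecLin =
      (piScalarRight R S S m).toLinearMap ∘ₗ AlgebraTensorModule.lTensor S S M.mulVecLin ∘ₗ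
        eN.symm.toLinearMap := by
    refine LinearMap.ext fun v => ?_
    simp only [LinearMap.coe_comp, Function.comp_apply, LinearEquiv.coe_coe,
      piScalarRight_lTensor_mulVecLin, eN, LinearEquiv.apply_symm_apply]
  rw [hM, LinearEquiv.ker_comp, LinearMap.ker_comp, Submodule.comap_equiv_eq_map_symm,
    LinearEquiv.symm_symm, Module.Flat.ker_lTensor_eq]
  have hrange :
      LinearMap.range (AlgebraTensorModule.lTensor S S (LinearMap.ker M.mulVecLin).subtype) =
        (LinearMap.ker M.mulVecLin).baseChange S := rfl
  rw [hrange, Submodule.baseChange_eq_span, Submodule.map_span,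
    Submodule.map_coe, Set.image_image]
  congr 1
  refine Set.image_congr fun v _ => ?_
  ext j
  simp [eN, Algebra.algebraMap_eq_smul_one]

end Matrix

namespace Ring.DirectLimit

variable {ι : Type*} [Preorder ι] [IsDirectedOrder ι] {G : ι → Type*} [∀ i, CommRing (G i)]
  {f : ∀ i j, i ≤ j → G i →+* G j}

theorem exists_of_pi {κ : Type*} [Finite κ] (x : κ → DirectLimit G (f · · ·)) (i : ι) :
    ∃ j, ∃ _ : i ≤ j, ∃ y : κ → G j, of G (f · · ·) j ∘ y = x := by
  have : Nonempty ι := ⟨i⟩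
  choose idx y hy using fun k => exists_of (x k)
  obtain ⟨j₀, hj₀⟩ := Finite.exists_le idx
  obtain ⟨j, hij, hj₀j⟩ := exists_ge_ge i j₀
  exact ⟨j, hij, fun k => f (idx k) j ((hj₀ k).trans hj₀j) (y k), funext fun k => by simp [hy]⟩

theorem Matrix.exists_of [Nonempty ι] {m n : Type*} [Finite m] [Finite n]
    (M : Matrix m n (DirectLimit G (f · · ·))) :
    ∃ i, ∃ M₀ : Matrix m n (G i), M₀.map (of G (f · · ·) i) = M := by
  obtain ⟨i, -, y, hy⟩ := exists_of_pi (Function.uncurry M) (Classical.arbitrary ι)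
  exact ⟨i, Function.curry y, Matrix.ext fun a b => congr_fun hy (a, b)⟩

theorem flat_of_forall_flat [DirectedSystem G fun i j h => f i j h] (i : ι)
    (hflat : ∀ j (h : i ≤ j), letI := (f i j h).toAlgebra; Module.Flat (G i) (G j)) :
    letI := (of G (f · · ·) i).toAlgebra; Module.Flat (G i) (DirectLimit G (f · · ·)) := by
  let _ := (of G (f · · ·) i).toAlgebra
  refine Module.Flat.of_forall_isTrivialRelation fun {l r x} hrx => ?_
  obtain ⟨j, hij, y, rfl⟩ := exists_of_pi x i
  have hy : of G (f · · ·) j (∑ k, f i j hij (r k) * y k) = 0 := by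
    simpa [Algebra.smul_def, RingHom.algebraMap_toAlgebra] using hrx
  obtain ⟨j', hjj', hy'⟩ := of.zero_exact hy
  let _ := (f i j' (hij.trans hjj')).toAlgebra
  have := hflat j' (hij.trans hjj')
  obtain ⟨k, a, z, hyz, ha⟩ :=
    Module.Flat.isTrivialRelation_of_sum_smul_eq_zero (f := r) (x := f j j' hjj' ∘ y) (by
      simpa [Algebra.smul_def, RingHom.algebraMap_toAlgebra, DirectedSystem.map_map' f] using hy')
  refine ⟨k, a, of G (f · · ·) j' ∘ z, fun l => ?_, ha⟩
  simpa [Algebra.smul_def, RingHom.algebraMap_toAlgebra] using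
    congr_arg (of G (f · · ·) j') (hyz l)

end Ring.DirectLimit

theorem stmt3_general (ι : Type*) [Preorder ι] [IsDirected ι (· ≤ ·)] [Nonempty ι]
    (G : ι → Type*) [∀ i, CommRing (G i)]
    (f : ∀ i j, i ≤ j → G i →+* G j)
    [DirectedSystem G fun i j h => f i j h]
    (hflat : ∀ i j (h : i ≤ j),
      letI : Algebra (G i) (G j) := (f i j h).toAlgebra
      Module.FaithfullyFlat (G i) (G j))
    (hcoh : ∀ i, IsCoherentRing (G i)) :
    IsCoherentRing (Ring.DirectLimit G fun i j h => f i j h) := by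
  intro n m F
  obtain ⟨i, M₀, hM₀⟩ := Ring.DirectLimit.Matrix.exists_of (LinearMap.toMatrix' F)
  let _ := (Ring.DirectLimit.of G (f · · ·) i).toAlgebra
  have := Ring.DirectLimit.flat_of_forall_flat i fun j h => (hflat i j h).toFlat
  have hF : F = (M₀.map (algebraMap (G i) _)).mulVecLin := by
    rw [RingHom.algebraMap_toAlgebra, hM₀, ← Matrix.toLin'_apply', Matrix.toLin'_toMatrix']
  rw [hF, Matrix.ker_mulVecLin_map_algebraMap]
  exact (hcoh i n m M₀.mulVecLin).span_image_of_tower _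

/-- Let `D` be a directed set and `F` a functor from `D` to commutative rings such that each
transition map is faithfully flat and each `F(d)` is coherent.  Then the colimit `colim_D F`
is a coherent ring. -/
theorem stmt3 (ι : Type*) [Preorder ι] [IsDirected ι (· ≤ ·)] [Nonempty ι]
    [DecidableEq ι]
    (G : ι → Type*) [∀ i, CommRing (G i)]
    (f : ∀ i j, i ≤ j → G i →+* G j)
    [DirectedSystem G fun i j h => f i j h]
    (hflat : ∀ i j (h : i ≤ j),
      letI : Algebra (G i) (G j) := (f i j h).toAlgebra
      Module.FaithfullyFlat (G i) (G j))
    (hcoh : ∀ i, IsCoherentRing (G i)) :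
    IsCoherentRing (Ring.DirectLimit G fun i j h => f i j h) :=
  stmt3_general ι G f hflat hcoh
end

section
/- If f : A → B is a faithfully flat homomorphism of commutative rings and B is coherent, then A is coherent. -/
open TensorProduct

theorem IsCoherentRing.fg_ker {R : Type*} [CommRing R] (hR : IsCoherentRing R)
    {M N : Type*} [AddCommGroup M] [Module R M] [Module.Free R M] [Module.Finite R M]
    [AddCommGroup N] [Module R N] [Module.Free R N] [Module.Finite R N] (f : M →ₗ[R] N) :
    (LinearMap.ker f).FG := by
  let eM := ((Module.Free.chooseBasis R M).reindex (Fintype.equivFin _)).equivFun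
  let eN := ((Module.Free.chooseBasis R N).reindex (Fintype.equivFin _)).equivFun
  have h := (hR _ _ (eN.toLinearMap ∘ₗ f ∘ₗ eM.symm.toLinearMap)).map eM.symm.toLinearMap
  rwa [LinearEquiv.ker_comp, LinearMap.ker_comp,
    Submodule.map_comap_eq_of_surjective eM.symm.surjective] at h

theorem LinearMap.fg_ker_of_fg_ker_lTensor_of_faithfullyFlat {A : Type*} (B : Type*)
    [CommRing A] [CommRing B] [Algebra A B] [Module.FaithfullyFlat A B]
    {M N : Type*} [AddCommGroup M] [Module A M] [AddCommGroup N] [Module A N]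
    (f : M →ₗ[A] N) (h : (LinearMap.ker (AlgebraTensorModule.lTensor B B f)).FG) :
    (LinearMap.ker f).FG := by
  rw [← Module.Finite.iff_fg] at h ⊢
  have : Module.Finite B (B ⊗[A] LinearMap.ker f) := .equiv (LinearMap.tensorKerEquiv B B f).symm
  exact .of_finite_tensorProduct_of_faithfullyFlat B

/-- If `f : A → B` is a faithfully flat homomorphism of commutative rings and `B` is coherent,
then `A` is coherent. -/
theorem stmt4 (A B : Type*) [CommRing A] [CommRing B] (f : A →+* B)
    (hff : letI : Algebra A B := f.toAlgebra; Module.FaithfullyFlat A B)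
    (hB : IsCoherentRing B) : IsCoherentRing A := by
  let : Algebra A B := f.toAlgebra
  have : Module.FaithfullyFlat A B := hff
  intro n m g
  exact g.fg_ker_of_fg_ker_lTensor_of_faithfullyFlat B (hB.fg_ker _)
end

section
/- Let f : A → B be a faithfully flat homomorphism of commutative rings and M an A-module. Then M is finitely generated (respectively, finitely presented) if and only if B ⊗_A M is a finitely generated (respectively, finitely presented) B-module. -/
/-!
Finite generation descends along a faithfully flat extension because surjectivity of a map from
a free module does. For finite presentation, choose a surjection
`π : Aⁿ → M`; by flatness `B ⊗ ker π ≅ ker (B ⊗ π)`, which is finitely generated because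
`B ⊗ M` is finitely presented, so `ker π` is finitely generated by descent.
-/

open TensorProduct

lemma Module.FinitePresentation.of_finitePresentation_tensorProduct_of_faithfullyFlat
    {R : Type*} (S : Type*) [CommRing R] [CommRing S] [Algebra R S] [Module.FaithfullyFlat R S]
    {M : Type*} [AddCommGroup M] [Module R M] [Module.FinitePresentation S (S ⊗[R] M)] :
    Module.FinitePresentation R M := by
  have : Module.Finite R M := .of_finite_tensorProduct_of_faithfullyFlat S
  obtain ⟨n, π, hπ⟩ := Module.Finite.exists_fin' R M
  have hπS : Function.Surjective (AlgebraTensorModule.lTensor S S π) :=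
    LinearMap.lTensor_surjective S hπ
  have : Module.Finite S (S ⊗[R] LinearMap.ker π) :=
    (Module.Finite.equiv_iff (LinearMap.tensorKerEquiv S S π)).mpr <|
      Module.Finite.iff_fg.mpr (Module.FinitePresentation.fg_ker _ hπS)
  have : Module.Finite R (LinearMap.ker π) := .of_finite_tensorProduct_of_faithfullyFlat S
  exact (Module.FinitePresentation.fg_ker_iff π hπ).mp (Module.Finite.iff_fg.mp this)

/-- Let `A → B` be a faithfully flat homomorphism of commutative rings and `M` an `A`-module.
Then `M` is finitely generated (resp. finitely presented) if and only if `B ⊗_A M` is a finitely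
generated (resp. finitely presented) `B`-module. -/
theorem stmt5 (A B : Type*) [CommRing A] [CommRing B] [Algebra A B]
    [Module.FaithfullyFlat A B] (M : Type*) [AddCommGroup M] [Module A M] :
    (Module.Finite A M ↔ Module.Finite B (B ⊗[A] M)) ∧
    (Module.FinitePresentation A M ↔ Module.FinitePresentation B (B ⊗[A] M)) :=
  ⟨⟨fun _ ↦ inferInstance, fun _ ↦ .of_finite_tensorProduct_of_faithfullyFlat B⟩,
    ⟨fun _ ↦ inferInstance, fun _ ↦ .of_finitePresentation_tensorProduct_of_faithfullyFlat B⟩⟩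
end

section
/- Let G be a profinite group acting continuously on a commutative ring A with the discrete topology, and let B = A^G. Then the induced map π : Spec(A) → Spec(B) is surjective, and G acts transitively on each fiber π⁻¹(𝔭). -/
/-- The subring of elements of `A` fixed by every element of the subgroup `K`. -/
def fixedSubring (G : Type*) [Group G] (A : Type*) [CommRing A] [MulSemiringAction G A]
    (K : Subgroup G) : Subring A where
  carrier := {a | ∀ g ∈ K, g • a = a}
  mul_mem' := fun ha hb g hg => by rw [smul_mul', ha g hg, hb g hg]
  one_mem' := fun g _ => smul_one g
  add_mem' := fun ha hb g hg => by rw [smul_add, ha g hg, hb g hg]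
  zero_mem' := fun g _ => smul_zero g
  neg_mem' := fun ha g hg => by rw [smul_neg, ha g hg]


/-!
Every `a : A` has an open stabilizer, hence a finite orbit, so `A` is integral over `A^G`: this
gives lying over, i.e. surjectivity. Transitivity on fibres holds for each finite quotient `G ⧸ N`
acting on `A^N`, and compactness of `G` glues the resulting compatible choices into one `g : G`.
-/

instance fixedSubring.smulCommClass_top (G : Type*) [Group G] (A : Type*) [CommRing A]
    [MulSemiringAction G A] : SMulCommClass G (fixedSubring G A ⊤) A where
  smul_comm g b a := by
    change g • ((b : A) * a) = (b : A) * g • a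
    rw [smul_mul', b.2 g trivial]

instance fixedSubring.isInvariant_top (G : Type*) [Group G] (A : Type*) [CommRing A]
    [MulSemiringAction G A] : Algebra.IsInvariant (fixedSubring G A ⊤) A G where
  isInvariant a ha := ⟨⟨a, fun g _ => ha g⟩, rfl⟩

theorem stmt7_general (G : Type*) [Group G] [TopologicalSpace G] [IsTopologicalGroup G]
    [CompactSpace G] [TotallyDisconnectedSpace G]
    (A : Type*) [CommRing A] [TopologicalSpace A] [DiscreteTopology A]
    [MulSemiringAction G A] [ContinuousSMul G A] :
    Function.Surjective (PrimeSpectrum.comap (fixedSubring G A ⊤).subtype) ∧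
    ∀ q q' : PrimeSpectrum A,
      PrimeSpectrum.comap (fixedSubring G A ⊤).subtype q =
        PrimeSpectrum.comap (fixedSubring G A ⊤).subtype q' →
      ∃ g : G, PrimeSpectrum.comap (MulSemiringAction.toRingHom G A g) q = q' := by
  have : Algebra.IsIntegral (fixedSubring G A ⊤) A :=
    Algebra.IsInvariant.isIntegral_of_profinite (G := G)
  refine ⟨Algebra.IsIntegral.comap_surjective (fixedSubring G A ⊤) A, fun q q' hqq' => ?_⟩
  obtain ⟨g, hg⟩ := Algebra.IsInvariant.exists_smul_of_under_eq_of_profinite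
    (A := fixedSubring G A ⊤) (G := G) q.asIdeal q'.asIdeal (congrArg PrimeSpectrum.asIdeal hqq')
  refine ⟨g⁻¹, PrimeSpectrum.ext ?_⟩
  ext x
  simp [hg, Ideal.mem_pointwise_smul_iff_inv_smul_mem]

/-- Let `G` be a profinite group acting continuously on a commutative ring `A` with the discrete
topology, and let `B = A^G`.  Then the induced map `π : Spec(A) → Spec(B)` is surjective, and `G`
acts transitively on each fiber of `π`. -/
theorem stmt7 (G : Type*) [Group G] [TopologicalSpace G] [IsTopologicalGroup G]
    [CompactSpace G] [T2Space G] [TotallyDisconnectedSpace G]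
    (A : Type*) [CommRing A] [TopologicalSpace A] [DiscreteTopology A]
    [MulSemiringAction G A] [ContinuousSMul G A] :
    Function.Surjective (PrimeSpectrum.comap (fixedSubring G A ⊤).subtype) ∧
    ∀ q q' : PrimeSpectrum A,
      PrimeSpectrum.comap (fixedSubring G A ⊤).subtype q =
        PrimeSpectrum.comap (fixedSubring G A ⊤).subtype q' →
      ∃ g : G, PrimeSpectrum.comap (MulSemiringAction.toRingHom G A g) q = q' :=
  stmt7_general G A
end

section
/- Let k be a field containing all roots of unity, with absolute Galois group G_k. Then the abelianization G_k^{ab} of G_k is torsion free; consequently G_k is totally torsion free (every closed subgroup has torsion-free abelianization). -/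
/-!
Write `C` for the closure of `⁅H, H⁆`. If `β ^ m` is fixed by `H`, then `σ ↦ σ β / β` is a
homomorphism from `H` to the `m`-th roots of unity, which lie in `k` and are fixed by every
automorphism; so `C` fixes `β`. Hence if `g ^ n ∈ C` and `α ^ d` is fixed by `H`, an `n`-th root
`β` of `α` satisfies `(g β / β) ^ n = 1`, and `g α = (g β) ^ n = α`.

Conversely, if `g ∉ C`, then on some finite Galois layer `F` the image of `g` survives in the
abelianization of the image of `H`; a character into the roots of unity of `k` separates it, and
Hilbert 90 turns that character into an eigenvector `α ∈ F` with `α ^ d` fixed by `H` and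
`g α ≠ α`.
-/

section

variable {k K : Type*} [Field k] [Field K] [Algebra k K]

theorem AlgEquiv.apply_eq_self_of_pow_eq_one {m : ℕ} (hm : m ≠ 0) {ζ : k}
    (hζ : IsPrimitiveRoot ζ m) {x : K} (hx : x ^ m = 1) (σ : K ≃ₐ[k] K) : σ x = x := by
  have : NeZero m := ⟨hm⟩
  obtain ⟨i, -, rfl⟩ := (hζ.map_of_injective (algebraMap k K).injective).eq_pow_of_pow_eq_one hx
  rw [← map_pow, AlgEquiv.commutes]

section KummerCharacter

variable {H : Subgroup (K ≃ₐ[k] K)} {β : K}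

theorem apply_div_self_fixed_of_pow_fixed {m : ℕ} (hm : m ≠ 0) {ζ : k}
    (hζ : IsPrimitiveRoot ζ m) (hβ : β ≠ 0) (hβm : ∀ σ ∈ H, σ (β ^ m) = β ^ m) :
    ∀ σ ∈ H, ∀ τ : K ≃ₐ[k] K, τ (σ β / β) = σ β / β := fun σ hσ τ =>
  τ.apply_eq_self_of_pow_eq_one hm hζ <| by
    rw [div_pow, ← map_pow, hβm σ hσ, div_self (pow_ne_zero m hβ)]

def kummerCharacter (hβ : β ≠ 0)
    (hfix : ∀ σ ∈ H, ∀ τ : K ≃ₐ[k] K, τ (σ β / β) = σ β / β) : H →* Kˣ where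
  toFun σ := Units.mk0 ((σ : K ≃ₐ[k] K) β / β)
    (div_ne_zero ((map_ne_zero_iff _ (σ : K ≃ₐ[k] K).injective).mpr hβ) hβ)
  map_one' := by ext; simp [hβ]
  map_mul' σ τ := by
    ext
    have hτ : (τ : K ≃ₐ[k] K) β = ((τ : K ≃ₐ[k] K) β / β) * β := by field_simp
    simp only [Subgroup.coe_mul, AlgEquiv.mul_apply, Units.val_mk0, Units.val_mul]
    rw [hτ, map_mul, hfix τ τ.2]
    field_simp

variable (hβ : β ≠ 0) (hfix : ∀ σ ∈ H, ∀ τ : K ≃ₐ[k] K, τ (σ β / β) = σ β / β)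

theorem apply_eq_kummerCharacter_mul (σ : H) :
    (σ : K ≃ₐ[k] K) β = kummerCharacter hβ hfix σ * β := by
  simp [kummerCharacter, hβ]

theorem kummerCharacter_eq_one_iff (σ : H) :
    kummerCharacter hβ hfix σ = 1 ↔ (σ : K ≃ₐ[k] K) β = β := by
  rw [apply_eq_kummerCharacter_mul hβ hfix, Units.ext_iff, Units.val_one]
  exact ⟨fun h => by rw [h, one_mul], fun h => mul_right_cancel₀ hβ (by rw [h, one_mul])⟩

end KummerCharacter

theorem apply_eq_self_of_mem_closure_commutator [Algebra.IsIntegral k K]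
    {H : Subgroup (K ≃ₐ[k] K)} {m : ℕ} (hm : m ≠ 0) {ζ : k} (hζ : IsPrimitiveRoot ζ m) {β : K}
    (hβm : ∀ σ ∈ H, σ (β ^ m) = β ^ m) {σ : K ≃ₐ[k] K}
    (hσ : σ ∈ ⁅H, H⁆.topologicalClosure) : σ β = β := by
  rcases eq_or_ne β 0 with rfl | hβ
  · exact map_zero σ
  set χ := kummerCharacter hβ (apply_div_self_fixed_of_pow_fixed hm hζ hβ hβm)
  have hcomm : ⁅H, H⁆ ≤ MulAction.stabilizer (K ≃ₐ[k] K) β := by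
    rw [← Subgroup.map_subtype_commutator]
    rintro _ ⟨τ, hτ, rfl⟩
    exact (kummerCharacter_eq_one_iff hβ _ τ).mp (Abelianization.commutator_subset_ker χ hτ)
  exact Subgroup.topologicalClosure_minimal _ hcomm
    (Subgroup.isClosed_of_isOpen _ (stabilizer_isOpen_of_isIntegral β)) hσ

theorem apply_eq_self_of_pow_mem_closure_commutator [IsSepClosed K] [Algebra.IsIntegral k K]
    (hroots : ∀ n : ℕ, n ≠ 0 → ∃ ζ : k, IsPrimitiveRoot ζ n)
    {H : Subgroup (K ≃ₐ[k] K)} {g : K ≃ₐ[k] K} (hg : g ∈ H) {n : ℕ} (hn : n ≠ 0)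
    (hgn : g ^ n ∈ ⁅H, H⁆.topologicalClosure) {α : K} {d : ℕ} (hd : d ≠ 0)
    (hα : ∀ σ ∈ H, σ (α ^ d) = α ^ d) : g α = α := by
  rcases eq_or_ne α 0 with rfl | hα0
  · exact map_zero g
  obtain ⟨ζ, hζ⟩ := hroots (n * d) (mul_ne_zero hn hd)
  obtain ⟨ξ, hξ⟩ := hroots n hn
  have : NeZero n := ⟨hn⟩
  have : NeZero (n : K) := (hξ.map_of_injective (algebraMap k K).injective).neZero'
  obtain ⟨β, rfl⟩ := IsSepClosed.exists_pow_nat_eq α n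
  have hβ : β ≠ 0 := ne_zero_pow hn hα0
  have hβnd : ∀ σ ∈ H, σ (β ^ (n * d)) = β ^ (n * d) := by simpa only [pow_mul] using hα
  have hfix := apply_div_self_fixed_of_pow_fixed (mul_ne_zero hn hd) hζ hβ hβnd
  set χ := kummerCharacter hβ hfix
  have hχ : χ ⟨g, hg⟩ ^ n = 1 := by
    rw [← map_pow, kummerCharacter_eq_one_iff]
    exact apply_eq_self_of_mem_closure_commutator (mul_ne_zero hn hd) hζ hβnd hgn
  rw [map_pow, show g β = _ from apply_eq_kummerCharacter_mul hβ hfix ⟨g, hg⟩, mul_pow,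
    ← Units.val_pow_eq_pow_val, hχ, Units.val_one, one_mul]

theorem exists_monoidHom_apply_ne_one_of_notMem_commutator {G : Type*} [Group G] [Finite G]
    (hroots : ∀ n : ℕ, n ≠ 0 → ∃ ζ : k, IsPrimitiveRoot ζ n) {g : G} (hg : g ∉ commutator G) :
    ∃ φ : G →* kˣ, φ g ≠ 1 := by
  have : NeZero (Monoid.exponent (Abelianization G)) := ⟨Monoid.exponent_ne_zero_of_finite⟩
  have : HasEnoughRootsOfUnity k (Monoid.exponent (Abelianization G)) :=
    ⟨hroots _ (NeZero.ne _), rootsOfUnity.isCyclic k _⟩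
  have hg' : Abelianization.of g ≠ 1 := by rwa [Ne, ← MonoidHom.mem_ker, Abelianization.ker_of]
  obtain ⟨φ, hφ⟩ := CommGroup.exists_apply_ne_one_of_hasEnoughRootsOfUnity _ k hg'
  exact ⟨φ.comp Abelianization.of, hφ⟩

theorem exists_ne_zero_forall_apply_eq_algebraMap_mul {F : Type*} [Field F] [Algebra k F]
    [FiniteDimensional k F] (H : Subgroup (F ≃ₐ[k] F)) (φ : H →* kˣ) :
    ∃ α : F, α ≠ 0 ∧ ∀ σ : H, (σ : F ≃ₐ[k] F) α = algebraMap k F (φ σ) * α := by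
  set L := IntermediateField.fixedField H
  let e : Gal(F/L) ≃* H := L.fixingSubgroupEquiv.symm.trans
    (MulEquiv.subgroupCongr (IntermediateField.fixingSubgroup_fixedField H))
  let f : Gal(F/L) → Fˣ := fun σ => Units.map (algebraMap k F) (φ (e σ))
  have hf : groupCohomology.IsMulCocycle₁ f := by
    intro σ τ
    ext
    simp only [f, AlgEquiv.smul_units_def, map_mul, Units.val_mul, Units.coe_map,
      MonoidHom.coe_coe]
    rw [IsScalarTower.algebraMap_apply k L F (φ (e τ) : k), AlgEquiv.commutes, mul_comm]
  obtain ⟨β, hβ⟩ := groupCohomology.isMulCoboundary₁_of_isMulCocycle₁_of_aut_to_units f hf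
  refine ⟨β, β.ne_zero, fun σ => ?_⟩
  have := congrArg Units.val (hβ (e.symm σ))
  simp only [f, AlgEquiv.smul_units_def, Units.val_div_eq_div_val, Units.coe_map,
    MonoidHom.coe_coe, MulEquiv.apply_symm_apply] at this
  rw [← this, div_mul_cancel₀ _ β.ne_zero]
  rfl

theorem exists_pow_fixed_apply_ne_of_notMem_commutator {F : Type*} [Field F] [Algebra k F]
    [FiniteDimensional k F] (hroots : ∀ n : ℕ, n ≠ 0 → ∃ ζ : k, IsPrimitiveRoot ζ n)
    {H : Subgroup (F ≃ₐ[k] F)} {γ : F ≃ₐ[k] F} (hγ : γ ∈ H) (hγc : γ ∉ ⁅H, H⁆) :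
    ∃ α : F, ∃ d : ℕ, d ≠ 0 ∧ (∀ σ ∈ H, σ (α ^ d) = α ^ d) ∧ γ α ≠ α := by
  have hγ' : (⟨γ, hγ⟩ : H) ∉ commutator H := fun h =>
    hγc (H.map_subtype_commutator ▸ ⟨_, h, rfl⟩)
  obtain ⟨φ, hφ⟩ := exists_monoidHom_apply_ne_one_of_notMem_commutator hroots hγ'
  obtain ⟨α, hα0, hα⟩ := exists_ne_zero_forall_apply_eq_algebraMap_mul H φ
  refine ⟨α, Nat.card H, Nat.card_pos.ne', fun σ hσ => ?_, fun h => hφ ?_⟩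
  · rw [map_pow, hα ⟨σ, hσ⟩, mul_pow, ← map_pow, ← Units.val_pow_eq_pow_val, ← map_pow φ,
      pow_card_eq_one', map_one, Units.val_one, map_one, one_mul]
  · ext
    apply (algebraMap k F).injective
    rw [Units.val_one, map_one]
    exact mul_right_cancel₀ hα0 (by rw [← hα, one_mul, h])

open scoped Topology in
theorem exists_restrictNormalHom_ne_of_notMem [IsGalois k K] {C : Set (K ≃ₐ[k] K)}
    (hC : IsClosed C) {g : K ≃ₐ[k] K} (hg : g ∉ C) :
    ∃ L : FiniteGaloisIntermediateField k K,
      ∀ x ∈ C, AlgEquiv.restrictNormalHom L x ≠ AlgEquiv.restrictNormalHom L g := by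
  have hnhds : (g * ·) ⁻¹' Cᶜ ∈ 𝓝 1 :=
    (hC.isOpen_compl.preimage (continuous_const_mul g)).mem_nhds (by simpa using hg)
  obtain ⟨L, hL⟩ := (InfiniteGalois.krullTopology_mem_nhds_one_iff_of_isGalois _).mp hnhds
  refine ⟨L, fun x hx h => hL (?_ : g⁻¹ * x ∈ L.fixingSubgroup) (by simpa using hx)⟩
  rw [← IntermediateField.restrictNormalHom_ker, MonoidHom.mem_ker, map_mul, map_inv, h,
    inv_mul_cancel]

theorem exists_pow_fixed_apply_ne_of_notMem_closure_commutator [IsGalois k K]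
    (hroots : ∀ n : ℕ, n ≠ 0 → ∃ ζ : k, IsPrimitiveRoot ζ n)
    {H : Subgroup (K ≃ₐ[k] K)} {g : K ≃ₐ[k] K} (hg : g ∈ H)
    (hgc : g ∉ ⁅H, H⁆.topologicalClosure) :
    ∃ α : K, ∃ d : ℕ, d ≠ 0 ∧ (∀ σ ∈ H, σ (α ^ d) = α ^ d) ∧ g α ≠ α := by
  obtain ⟨L, hL⟩ :=
    exists_restrictNormalHom_ne_of_notMem (Subgroup.isClosed_topologicalClosure _) hgc
  set ρ := AlgEquiv.restrictNormalHom (F := k) (K₁ := K) L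
  have hρg : ρ g ∉ ⁅H.map ρ, H.map ρ⁆ := by
    rw [← Subgroup.map_commutator]
    rintro ⟨x, hx, hxg⟩
    exact hL x (Subgroup.le_topologicalClosure _ hx) hxg
  obtain ⟨α, d, hd, hα, hgα⟩ :=
    exists_pow_fixed_apply_ne_of_notMem_commutator hroots (Subgroup.mem_map_of_mem ρ hg) hρg
  refine ⟨α, d, hd, fun σ hσ => ?_, fun h => hgα (Subtype.ext ?_)⟩
  · have := congrArg ((↑) : L → K) (hα (ρ σ) (Subgroup.mem_map_of_mem ρ hσ))
    rwa [AlgEquiv.restrictNormalHom_apply] at this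
  · rw [AlgEquiv.restrictNormalHom_apply]
    exact h

end

/-- Let `k` be a field containing all roots of unity, with absolute Galois group
`G_k = Gal(K/k)` where `K` is a separable closure of `k`.  Then every closed subgroup `H` of
`G_k` has torsion-free abelianization (i.e. `G_k` is totally torsion free); in particular, taking
`H = G_k`, the abelianization of `G_k` is torsion free.  Torsion-freeness of the abelianization
`H/closure [H,H]` is expressed by: if `g ∈ H` and `g^n` lies in the closure of the commutator
subgroup for some `n ≠ 0`, then `g` itself lies in that closure. -/
theorem stmt8 (k K : Type*) [Field k] [Field K] [Algebra k K] [IsSepClosure k K]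
    (hroots : ∀ n : ℕ, n ≠ 0 → ∃ ζ : k, IsPrimitiveRoot ζ n) :
    ∀ H : Subgroup (K ≃ₐ[k] K), IsClosed (H : Set (K ≃ₐ[k] K)) →
      ∀ g ∈ H, ∀ n : ℕ, n ≠ 0 →
        g ^ n ∈ (⁅H, H⁆ : Subgroup (K ≃ₐ[k] K)).topologicalClosure →
        g ∈ (⁅H, H⁆ : Subgroup (K ≃ₐ[k] K)).topologicalClosure := by
  intro H _ g hg n hn hgn
  have : IsSepClosed K := IsSepClosure.sep_closed k
  by_contra hgc
  obtain ⟨α, d, hd, hα, hgα⟩ :=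
    exists_pow_fixed_apply_ne_of_notMem_closure_commutator hroots hg hgc
  exact hgα (apply_eq_self_of_pow_mem_closure_commutator hroots hg hn hgn hd hα)
end

section
/- The 2-adic Heisenberg group H (upper triangular 3×3 matrices over ℤ₂ with ones on the diagonal) is not totally torsion free: the closed subgroup of matrices whose (1,2)-entry lies in 2ℤ₂ has abelianization isomorphic to ℤ₂ ⊕ ℤ₂ ⊕ ℤ/2ℤ, which has torsion. -/
/-! The 2-adic Heisenberg group: upper triangular 3×3 matrices `[[1,a,b],[0,1,c],[0,0,1]]`
over `ℤ₂`, encoded by the three entries `a`, `b`, `c`. -/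

@[ext] structure Heis : Type where
  a : ℤ_[2]
  b : ℤ_[2]
  c : ℤ_[2]

namespace Heis

noncomputable instance : Mul Heis := ⟨fun x y => ⟨x.a + y.a, x.b + y.b + x.a * y.c, x.c + y.c⟩⟩
noncomputable instance : One Heis := ⟨⟨0, 0, 0⟩⟩
noncomputable instance : Inv Heis := ⟨fun x => ⟨-x.a, x.a * x.c - x.b, -x.c⟩⟩

@[simp] lemma mul_a (x y : Heis) : (x * y).a = x.a + y.a := rfl
@[simp] lemma mul_b (x y : Heis) : (x * y).b = x.b + y.b + x.a * y.c := rfl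
@[simp] lemma mul_c (x y : Heis) : (x * y).c = x.c + y.c := rfl
@[simp] lemma one_a : (1 : Heis).a = 0 := rfl
@[simp] lemma one_b : (1 : Heis).b = 0 := rfl
@[simp] lemma one_c : (1 : Heis).c = 0 := rfl
@[simp] lemma inv_a (x : Heis) : x⁻¹.a = -x.a := rfl
@[simp] lemma inv_b (x : Heis) : x⁻¹.b = x.a * x.c - x.b := rfl
@[simp] lemma inv_c (x : Heis) : x⁻¹.c = -x.c := rfl

noncomputable instance : Group Heis where
  mul_assoc x y z := by ext <;> simp only [mul_a, mul_b, mul_c] <;> ring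
  one_mul x := by ext <;> simp only [mul_a, mul_b, mul_c, one_a, one_b, one_c] <;> ring
  mul_one x := by ext <;> simp only [mul_a, mul_b, mul_c, one_a, one_b, one_c] <;> ring
  inv_mul_cancel x := by
    ext <;> simp only [mul_a, mul_b, mul_c, inv_a, inv_b, inv_c, one_a, one_b, one_c] <;> ring

/-- The topology inherited from `ℤ₂ × ℤ₂ × ℤ₂`. -/
noncomputable instance : TopologicalSpace Heis :=
  TopologicalSpace.induced (fun x => (x.a, x.b, x.c)) inferInstance

lemma cont_coords : Continuous fun x : Heis => (x.a, x.b, x.c) := continuous_induced_dom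

lemma cont_a : Continuous Heis.a := (continuous_fst).comp cont_coords
lemma cont_b : Continuous Heis.b := (continuous_fst.comp continuous_snd).comp cont_coords
lemma cont_c : Continuous Heis.c := (continuous_snd.comp continuous_snd).comp cont_coords

instance : IsTopologicalGroup Heis where
  continuous_mul := by
    apply continuous_induced_rng.2
    refine Continuous.prodMk ?_ (Continuous.prodMk ?_ ?_)
    · exact ((cont_a.comp continuous_fst).add (cont_a.comp continuous_snd))
    · exact (((cont_b.comp continuous_fst).add (cont_b.comp continuous_snd)).add
        ((cont_a.comp continuous_fst).mul (cont_c.comp continuous_snd)))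
    · exact ((cont_c.comp continuous_fst).add (cont_c.comp continuous_snd))
  continuous_inv := by
    apply continuous_induced_rng.2
    refine Continuous.prodMk ?_ (Continuous.prodMk ?_ ?_)
    · exact cont_a.neg
    · exact (cont_a.mul cont_c).sub cont_b
    · exact cont_c.neg

/-- The subgroup of matrices whose `(1,2)`-entry lies in `2ℤ₂`. -/
noncomputable def K : Subgroup Heis where
  carrier := {x | ∃ y : ℤ_[2], x.a = 2 * y}
  mul_mem' := by
    rintro x y ⟨ya, ha⟩ ⟨yb, hb⟩
    exact ⟨ya + yb, by rw [mul_a, ha, hb]; ring⟩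
  one_mem' := ⟨0, by rw [one_a]; ring⟩
  inv_mem' := by
    rintro x ⟨y, hy⟩
    exact ⟨-y, by rw [inv_a, hy]; ring⟩

instance : ((commutator ↥K).topologicalClosure).Normal :=
  Subgroup.is_normal_topologicalClosure (commutator ↥K)

end Heis

/-! Write the elements of `K` as `(2u, b, c)`. The map `(2u, b, c) ↦ (u, c, b mod 2)` is a
homomorphism onto `ℤ₂ × ℤ₂ × ℤ/2` because the cocycle term `a c'` of the group law is even on `K`.
Its kernel `{(0, 2t, 0)}` is closed and consists of the commutators `⁅(2, 0, 0), (0, 0, t)⁆`, so it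
is exactly the closed commutator subgroup of `K`. -/

lemma isClosed_setOf_dvd {R : Type*} [Semigroup R] [TopologicalSpace R] [ContinuousMul R]
    [CompactSpace R] [T2Space R] (d : R) : IsClosed {x : R | d ∣ x} := by
  have hrange : Set.range (d * ·) = {x : R | d ∣ x} := by
    ext x
    exact ⟨fun ⟨y, hy⟩ => ⟨y, hy.symm⟩, fun ⟨y, hy⟩ => ⟨y, hy.symm⟩⟩
  exact hrange ▸ (isCompact_range (continuous_const_mul d)).isClosed

lemma PadicInt.toZMod_eq_zero_iff_dvd {p : ℕ} [Fact p.Prime] (x : ℤ_[p]) :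
    PadicInt.toZMod x = 0 ↔ (p : ℤ_[p]) ∣ x := by
  rw [← RingHom.mem_ker, PadicInt.ker_toZMod, PadicInt.maximalIdeal_eq_span_p,
    Ideal.mem_span_singleton]

lemma PadicInt.toZMod_eq_zero_iff_two_dvd (z : ℤ_[2]) : PadicInt.toZMod z = 0 ↔ 2 ∣ z := by
  rw [PadicInt.toZMod_eq_zero_iff_dvd, Nat.cast_ofNat]

namespace Heis

open scoped commutatorElement

lemma commutatorElement_eq (x y : Heis) : ⁅x, y⁆ = ⟨0, x.a * y.c - y.a * x.c, 0⟩ := by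
  rw [commutatorElement_def]
  ext <;> simp only [mul_a, mul_b, mul_c, inv_a, inv_b, inv_c] <;> ring

lemma mem_K {x : Heis} : x ∈ K ↔ 2 ∣ x.a := Iff.rfl

lemma isClosed_K : IsClosed (K : Set Heis) :=
  (isClosed_setOf_dvd 2).preimage cont_a

noncomputable def halfA (x : K) : ℤ_[2] := (mem_K.1 x.2).choose

lemma halfA_eq_iff (x : K) (u : ℤ_[2]) : halfA x = u ↔ (x : Heis).a = 2 * u := by
  rw [(mem_K.1 x.2).choose_spec, halfA]
  exact ⟨fun h => h ▸ rfl, fun h => mul_left_cancel₀ two_ne_zero h⟩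

noncomputable def abelianizationHom : K →* Multiplicative (ℤ_[2] × ℤ_[2] × ZMod 2) where
  toFun x := .ofAdd (halfA x, (x : Heis).c, PadicInt.toZMod (x : Heis).b)
  map_one' := by
    have : halfA 1 = 0 := (halfA_eq_iff 1 0).2 (by simp)
    simp [this]
  map_mul' x y := by
    have hhalf : halfA (x * y) = halfA x + halfA y := by
      rw [halfA_eq_iff, Subgroup.coe_mul, mul_a, mul_add, ← (halfA_eq_iff x _).1 rfl,
        ← (halfA_eq_iff y _).1 rfl]
    have hmod : PadicInt.toZMod ((x : Heis).a * (y : Heis).c) = 0 := by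
      rw [map_mul, (PadicInt.toZMod_eq_zero_iff_two_dvd _).2 (mem_K.1 x.2), zero_mul]
    simp only [hhalf, Subgroup.coe_mul, mul_b, mul_c, map_add, hmod, add_zero]
    rfl

lemma abelianizationHom_surjective : Function.Surjective abelianizationHom := by
  rintro ⟨u, c, z⟩
  refine ⟨⟨⟨2 * u, z.val, c⟩, u, rfl⟩, ?_⟩
  have hhalf : halfA ⟨⟨2 * u, z.val, c⟩, u, rfl⟩ = u := (halfA_eq_iff _ u).2 rfl
  have hmod : PadicInt.toZMod (z.val : ℤ_[2]) = z := by
    rw [map_natCast, ZMod.natCast_zmod_val]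
  simp only [abelianizationHom, MonoidHom.coe_mk, OneHom.coe_mk, hhalf, hmod]
  rfl

lemma mem_ker_abelianizationHom (x : K) :
    x ∈ abelianizationHom.ker ↔ (x : Heis).a = 0 ∧ (x : Heis).c = 0 ∧ 2 ∣ (x : Heis).b := by
  rw [MonoidHom.mem_ker, abelianizationHom, MonoidHom.coe_mk, OneHom.coe_mk, ofAdd_eq_one,
    Prod.mk_eq_zero, Prod.mk_eq_zero, halfA_eq_iff, mul_zero, PadicInt.toZMod_eq_zero_iff_two_dvd]

lemma isClosed_ker_abelianizationHom : IsClosed (abelianizationHom.ker : Set K) := by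
  have hker : (abelianizationHom.ker : Set K) = Subtype.val ⁻¹'
      (Heis.a ⁻¹' {0} ∩ Heis.c ⁻¹' {0} ∩ Heis.b ⁻¹' {z | 2 ∣ z}) := by
    ext x
    simp only [SetLike.mem_coe, mem_ker_abelianizationHom, Set.mem_preimage, Set.mem_inter_iff,
      Set.mem_singleton_iff, Set.mem_ofPred_eq, and_assoc]
  rw [hker]
  exact ((((isClosed_singleton.preimage cont_a).inter (isClosed_singleton.preimage cont_c)).inter
    ((isClosed_setOf_dvd 2).preimage cont_b))).preimage continuous_subtype_val

lemma ker_abelianizationHom_le_commutator : abelianizationHom.ker ≤ commutator K := by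
  rintro x hx
  obtain ⟨ha, hc, t, hb⟩ := (mem_ker_abelianizationHom x).1 hx
  have hg : (⟨2, 0, 0⟩ : Heis) ∈ K := ⟨1, (mul_one 2).symm⟩
  have hh : (⟨0, 0, t⟩ : Heis) ∈ K := ⟨0, (mul_zero 2).symm⟩
  have hx : x = ⁅(⟨_, hg⟩ : K), ⟨_, hh⟩⁆ := by
    apply Subtype.ext
    change (x : Heis) = ⁅(⟨2, 0, 0⟩ : Heis), ⟨0, 0, t⟩⁆
    rw [commutatorElement_eq]
    ext
    · exact ha
    · simp [hb]
    · exact hc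
  rw [hx, commutator]
  exact Subgroup.commutator_mem_commutator (Subgroup.mem_top _) (Subgroup.mem_top _)

lemma topologicalClosure_commutator_eq_ker :
    (commutator K).topologicalClosure = abelianizationHom.ker := by
  have hcomm : commutator K = abelianizationHom.ker :=
    le_antisymm (Abelianization.commutator_subset_ker _) ker_abelianizationHom_le_commutator
  rw [hcomm]
  exact le_antisymm (Subgroup.topologicalClosure_minimal _ le_rfl isClosed_ker_abelianizationHom)
    (Subgroup.le_topologicalClosure _)

end Heis

/-- The 2-adic Heisenberg group is not totally torsion free: the closed subgroup `K` of matrices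
whose `(1,2)`-entry lies in `2ℤ₂` has abelianization (quotient by the closure of the commutator
subgroup) isomorphic to `ℤ₂ ⊕ ℤ₂ ⊕ ℤ/2ℤ`, which has torsion (a nontrivial element whose square
is trivial). -/
theorem stmt9 :
    IsClosed (Heis.K : Set Heis) ∧
    Nonempty ((↥Heis.K ⧸ (commutator ↥Heis.K).topologicalClosure) ≃*
      Multiplicative (ℤ_[2] × ℤ_[2] × ZMod 2)) ∧
    ∃ q : ↥Heis.K ⧸ (commutator ↥Heis.K).topologicalClosure, q ≠ 1 ∧ q ^ 2 = 1 := by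
  let e := (QuotientGroup.quotientMulEquivOfEq Heis.topologicalClosure_commutator_eq_ker).trans
    (QuotientGroup.quotientKerEquivOfSurjective _ Heis.abelianizationHom_surjective)
  let t : Multiplicative (ℤ_[2] × ℤ_[2] × ZMod 2) := .ofAdd (0, 0, 1)
  have ht : t ≠ 1 := by simp [t, ofAdd_eq_one]
  have ht2 : t ^ 2 = 1 := by
    rw [← ofAdd_nsmul, ofAdd_eq_one, Prod.smul_mk, Prod.smul_mk, smul_zero, two_nsmul]
    rfl
  refine ⟨Heis.isClosed_K, ⟨e⟩, e.symm t, ?_, ?_⟩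
  · rwa [Ne, MulEquiv.map_eq_one_iff]
  · rw [← map_pow, ht2, map_one]
end

section
/- Let F be a finitely generated free ℤ_l-module with basis B, and let Σ_B ⋉ F act on F by (σ, f)·f' = σ·f' + f, where Σ_B permutes the basis. Then an element (σ, f) has a fixed point in F if and only if (σ, f) has finite order. -/
/-!
Write `T v = v ∘ τ + f` with `τ = σ⁻¹`, so that `Tⁿ w = w ∘ τⁿ + ∑_{k<n} f ∘ τᵏ`. If `T v = v`, the
sums telescope to `v - v ∘ τⁿ`, hence `Tⁿ = id` as soon as `τⁿ = id`. Conversely, `Tⁿ = id` forces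
`τⁿ = id` and `∑_{k<n} f ∘ τᵏ = 0`. This sum is a positive multiple of the sum of `f` over each
cycle of `τ`, so, `ℤ_p` being torsion free, every cycle sum vanishes. A fixed point is then
`v (τᵏ r) = -∑_{i<k} f (τⁱ r)` for a chosen base point `r` of each cycle, which is well defined
precisely because the cycle sums vanish.
-/

open Finset Function Equiv

theorem Function.Periodic.sum_range_mul_add {M : Type*} [AddCommMonoid M] {g : ℕ → M} {m : ℕ}
    (hg : Periodic g m) (q r : ℕ) :
    ∑ i ∈ range (m * q + r), g i = q • ∑ i ∈ range m, g i + ∑ i ∈ range r, g i := by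
  induction q with
  | zero => simp
  | succ q ih =>
    have hg' (i : ℕ) : g (m + i) = g i := by rw [add_comm]; exact hg i
    rw [show m * (q + 1) + r = m + (m * q + r) by ring, sum_range_add]
    simp only [hg', ih, succ_nsmul', add_assoc]

theorem Function.periodic_apply_iterate_minimalPeriod {α β : Type*} {τ : α → α} {x : α}
    (g : α → β) : Periodic (fun i => g (τ^[i] x)) (minimalPeriod τ x) :=
  fun _ => congrArg g iterate_add_minimalPeriod_eq

section Iterate

variable {α M : Type*} [AddCommMonoid M] {τ : α → α} {x : α}

theorem Function.sum_range_iterate_eq_of_iterate_eq {g : α → M} (hx : x ∈ periodicPts τ)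
    (hcycle : ∑ i ∈ range (minimalPeriod τ x), g (τ^[i] x) = 0) {k l : ℕ}
    (hkl : τ^[k] x = τ^[l] x) :
    ∑ i ∈ range k, g (τ^[i] x) = ∑ i ∈ range l, g (τ^[i] x) := by
  have hmod (j : ℕ) : ∑ i ∈ range j, g (τ^[i] x) =
      ∑ i ∈ range (j % minimalPeriod τ x), g (τ^[i] x) := by
    conv_lhs => rw [← Nat.div_add_mod j (minimalPeriod τ x)]
    rw [(periodic_apply_iterate_minimalPeriod g).sum_range_mul_add, hcycle, smul_zero, zero_add]
  have hpos := minimalPeriod_pos_of_mem_periodicPts hx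
  rw [hmod k, hmod l, (iterate_eq_iterate_iff_of_lt_minimalPeriod (Nat.mod_lt _ hpos)
    (Nat.mod_lt _ hpos)).1 (by simpa only [iterate_mod_minimalPeriod_eq] using hkl)]

theorem Function.IsPeriodicPt.sum_range_minimalPeriod_eq_zero [IsAddTorsionFree M] {g : α → M}
    {n : ℕ} (hx : IsPeriodicPt τ n x) (hn : 0 < n) (hsum : ∑ i ∈ range n, g (τ^[i] x) = 0) :
    ∑ i ∈ range (minimalPeriod τ x), g (τ^[i] x) = 0 := by
  obtain ⟨q, rfl⟩ := hx.minimalPeriod_dvd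
  rwa [← add_zero (_ * q), (periodic_apply_iterate_minimalPeriod g).sum_range_mul_add,
    sum_range_zero, add_zero, nsmul_eq_zero_iff_right (right_ne_zero_of_mul hn.ne')] at hsum

end Iterate

theorem Equiv.Perm.exists_add_eq_of_sum_range_minimalPeriod_eq_zero {B M : Type*} [Finite B]
    [AddCommGroup M] (τ : Perm B) {f : B → M}
    (hf : ∀ x, ∑ i ∈ range (minimalPeriod τ x), f (τ^[i] x) = 0) :
    ∃ v : B → M, ∀ b, v (τ b) + f b = v b := by
  set r : B → B := fun b => (Quotient.mk (Perm.SameCycle.setoid τ) b).out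
  have hr_apply (b : B) : r (τ b) = r b :=
    congrArg Quotient.out (Quotient.sound (Perm.sameCycle_apply_left.2 (Perm.SameCycle.refl _ _)))
  have hr (b : B) : ∃ k, τ^[k] (r b) = b := by
    simpa only [Perm.iterate_eq_pow] using
      (Quotient.mk_out (s := Perm.SameCycle.setoid τ) b).exists_nat_pow_eq
  have hperiodic (x : B) : x ∈ periodicPts τ :=
    mk_mem_periodicPts (orderOf_pos τ) <| by
      rw [IsPeriodicPt, IsFixedPt, Perm.iterate_eq_pow, pow_orderOf_eq_one]
      rfl
  choose k hk using hr
  refine ⟨fun b => -∑ i ∈ range (k b), f (τ^[i] (r b)), fun b => ?_⟩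
  have hkτ : τ^[k (τ b)] (r b) = τ^[k b + 1] (r b) := by
    rw [iterate_succ_apply', hk, ← hr_apply, hk]
  simp only [hr_apply, sum_range_iterate_eq_of_iterate_eq (hperiodic _) (hf _) hkτ,
    sum_range_succ, hk]
  abel

section Affine

variable {B M : Type*} [AddCommGroup M] {τ : B → B} {f : B → M}

theorem iterate_comp_add_apply (n : ℕ) (w : B → M) (b : B) :
    (fun v b => v (τ b) + f b)^[n] w b = w (τ^[n] b) + ∑ k ∈ range n, f (τ^[k] b) := by
  induction n generalizing w with
  | zero => simp
  | succ n ih =>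
    rw [iterate_succ_apply, ih, iterate_succ_apply', sum_range_succ_comm, add_assoc]

theorem sum_range_iterate_eq_sub_of_isFixedPt {v : B → M}
    (hv : IsFixedPt (fun v b => v (τ b) + f b) v) (n : ℕ) (b : B) :
    ∑ k ∈ range n, f (τ^[k] b) = v b - v (τ^[n] b) := by
  refine (sum_congr rfl fun k _ => ?_).trans (sum_range_sub' (fun k => v (τ^[k] b)) n)
  rw [iterate_succ_apply', ← congrFun hv (τ^[k] b), add_sub_cancel_left]

theorem iterate_comp_add_eq_id_of_isFixedPt {v : B → M}
    (hv : IsFixedPt (fun v b => v (τ b) + f b) v) {n : ℕ} (hn : τ^[n] = id) :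
    (fun v b => v (τ b) + f b)^[n] = id := by
  ext w b
  rw [iterate_comp_add_apply, sum_range_iterate_eq_sub_of_isFixedPt hv, hn]
  simp

theorem sum_range_iterate_eq_zero_of_iterate_comp_add_eq_id {n : ℕ}
    (h : (fun v b => v (τ b) + f b)^[n] = id) (b : B) :
    ∑ k ∈ range n, f (τ^[k] b) = 0 := by
  simpa [iterate_comp_add_apply] using congrFun (congrFun h 0) b

theorem iterate_eq_id_of_iterate_comp_add_eq_id [Nontrivial M] {n : ℕ}
    (h : (fun v b => v (τ b) + f b)^[n] = id) : τ^[n] = id := by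
  classical
  ext b
  by_contra hne
  rw [id_eq] at hne
  obtain ⟨m, hm⟩ := exists_ne (0 : M)
  have := congrFun (congrFun h (Pi.single b m)) b
  rw [iterate_comp_add_apply, sum_range_iterate_eq_zero_of_iterate_comp_add_eq_id h, add_zero,
    Pi.single_eq_of_ne hne, id_eq, Pi.single_eq_same] at this
  exact hm this.symm

end Affine

/-- Let `F = B → ℤ_p` be a finitely generated free module over the `l`-adic integers with (finite)
basis `B`, and let `Σ_B ⋉ F` act affinely on `F` by `(σ, f) · v = σ·v + f`, where
`(σ·v)(b) = v(σ⁻¹ b)`.  Then the element `(σ, f)` has a fixed point in `F` if and only if it has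
finite order (i.e. some positive iterate of the affine transformation is the identity). -/
theorem stmt10 (p : ℕ) [Fact p.Prime] (B : Type*) [Fintype B]
    (σ : Equiv.Perm B) (f : B → ℤ_[p]) :
    (∃ v : B → ℤ_[p], (fun b => v (σ.symm b) + f b) = v) ↔
      ∃ n : ℕ, 0 < n ∧ (fun (v : B → ℤ_[p]) (b : B) => v (σ.symm b) + f b)^[n] = id := by
  constructor
  · rintro ⟨v, hv⟩
    refine ⟨orderOf σ.symm, orderOf_pos _, iterate_comp_add_eq_id_of_isFixedPt hv ?_⟩
    rw [Perm.iterate_eq_pow, pow_orderOf_eq_one]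
    rfl
  · rintro ⟨n, hn, h⟩
    have hid := iterate_eq_id_of_iterate_comp_add_eq_id h
    obtain ⟨v, hv⟩ := Perm.exists_add_eq_of_sum_range_minimalPeriod_eq_zero σ.symm fun x =>
      IsPeriodicPt.sum_range_minimalPeriod_eq_zero (congrFun hid x) hn
        (sum_range_iterate_eq_zero_of_iterate_comp_add_eq_id h x)
    exact ⟨v, funext hv⟩
end

section
/- Let 0 → A → H → Q → 0 be a group extension with A abelian and Q cyclic of prime order l with generator σ. Define N(A) = {a + σ·a + ... + σ^{l-1}·a : a ∈ A} and c(σ) ∈ A/N(A) as the class of σ̄^l for any lift σ̄ of σ. Then σ lifts to an element of order l in H if and only if c(σ) = 0. -/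
/-!
Write `N_h(b) = ∏_{i<n} h^i b h^{-i}`. In any group `(b h)^n = N_h(b) h^n`, so replacing the lift
`h` of `σ` by `b h` with `b ∈ A` multiplies `h^l` by `N_h(b)`. Since `A` is abelian,
`N_h(a⁻¹) = N_h(a)⁻¹`; hence if `h^l = N_h(a)` then `(a⁻¹ h)^l = 1`, and `a⁻¹ h` has order exactly
`l` because its image `σ` already does.
-/

section ConjNorm

variable {H : Type*} [Group H]

def conjNorm (h b : H) (n : ℕ) : H :=
  ((List.range n).map fun i => h ^ i * b * (h ^ i)⁻¹).prod

theorem mul_pow_eq_conjNorm_mul_pow (b h : H) (n : ℕ) :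
    (b * h) ^ n = conjNorm h b n * h ^ n := by
  induction n with
  | zero => simp [conjNorm]
  | succ n ih =>
    rw [pow_succ, ih]
    simp only [conjNorm, List.range_succ, List.map_append, List.prod_append, List.map_cons,
      List.map_nil, List.prod_cons, List.prod_nil, mul_one, pow_succ]
    group

theorem conjNorm_inv {A : Subgroup H} [A.Normal] (hA : ∀ a ∈ A, ∀ b ∈ A, a * b = b * a)
    (h : H) {b : H} (hb : b ∈ A) (n : ℕ) : conjNorm h b⁻¹ n = (conjNorm h b n)⁻¹ := by
  have hconj : ∀ i : ℕ, h ^ i * b * (h ^ i)⁻¹ ∈ A := fun i => ‹A.Normal›.conj_mem b hb _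
  have hconj_inv : (fun i : ℕ => h ^ i * b⁻¹ * (h ^ i)⁻¹) =
      (fun x => x⁻¹) ∘ fun i : ℕ => h ^ i * b * (h ^ i)⁻¹ := by
    funext i
    simp [mul_assoc]
  rw [conjNorm, conjNorm, List.prod_inv_reverse, hconj_inv, ← List.map_map]
  refine (List.Perm.prod_eq' (List.reverse_perm _) ?_).symm
  refine List.pairwise_of_forall_mem_list ?_
  simp only [List.mem_reverse, List.mem_map]
  rintro _ ⟨_, ⟨i, -, rfl⟩, rfl⟩ _ ⟨_, ⟨j, -, rfl⟩, rfl⟩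
  exact hA _ (A.inv_mem (hconj i)) _ (A.inv_mem (hconj j))

theorem inv_mul_pow_eq_one_of_pow_eq_conjNorm {A : Subgroup H} [A.Normal]
    (hA : ∀ a ∈ A, ∀ b ∈ A, a * b = b * a) {h a : H} (ha : a ∈ A) {n : ℕ}
    (hn : h ^ n = conjNorm h a n) : (a⁻¹ * h) ^ n = 1 := by
  rw [mul_pow_eq_conjNorm_mul_pow, conjNorm_inv hA h ha, hn, inv_mul_cancel]

end ConjNorm

theorem stmt12_general (H : Type*) [Group H] (A : Subgroup H) [A.Normal]
    (habelian : ∀ a ∈ A, ∀ b ∈ A, a * b = b * a)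
    (l : ℕ) (σ : H ⧸ A) (hord : orderOf σ = l) :
    (∃ h : H, QuotientGroup.mk h = σ ∧ orderOf h = l) ↔
      ∃ h a : H, QuotientGroup.mk h = σ ∧ a ∈ A ∧
        h ^ l = ((List.range l).map fun i => h ^ i * a * (h ^ i)⁻¹).prod := by
  constructor
  · rintro ⟨h, rfl, rfl⟩
    exact ⟨h, 1, rfl, A.one_mem, by simp [pow_orderOf_eq_one]⟩
  · rintro ⟨h, a, rfl, ha, hpow⟩
    have hlift : QuotientGroup.mk (a⁻¹ * h) = (QuotientGroup.mk h : H ⧸ A) := by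
      rw [QuotientGroup.mk_mul, (QuotientGroup.eq_one_iff _).mpr (A.inv_mem ha), one_mul]
    refine ⟨a⁻¹ * h, hlift, Nat.dvd_antisymm ?_ ?_⟩
    · exact orderOf_dvd_of_pow_eq_one (inv_mul_pow_eq_one_of_pow_eq_conjNorm habelian ha hpow)
    · rw [← hord, ← hlift]
      exact orderOf_map_dvd (QuotientGroup.mk' A) _

/-- Let `1 → A → H → Q → 1` be a group extension with `A` abelian and `Q = H/A` cyclic of prime
order `l`, generated by `σ`.  Then `σ` lifts to an element of order `l` in `H` if and only if
`c(σ) = 0`, i.e. some lift `h` of `σ` satisfies `h^l = a · (h a h⁻¹) · (h² a h⁻²) ⋯` for some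
`a ∈ A` (that is, `h^l` lies in the norm subgroup `N(A)`). -/
theorem stmt12 (H : Type*) [Group H] (A : Subgroup H) [A.Normal]
    (habelian : ∀ a ∈ A, ∀ b ∈ A, a * b = b * a)
    (l : ℕ) (hl : l.Prime) (σ : H ⧸ A) (hord : orderOf σ = l)
    (hgen : ∀ q : H ⧸ A, q ∈ Subgroup.zpowers σ) :
    (∃ h : H, QuotientGroup.mk h = σ ∧ orderOf h = l) ↔
      ∃ h a : H, QuotientGroup.mk h = σ ∧ a ∈ A ∧
        h ^ l = ((List.range l).map fun i => h ^ i * a * (h ^ i)⁻¹).prod :=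
  stmt12_general H A habelian l σ hord
end

section
/- Let k be a field of characteristic l, and let A be an augmented k-algebra in which every element has an l-th root. Then for any subgroup G of Σ_n of l-power order, every element of the invariant subalgebra B^G of B = A^{⊗n} (with Σ_n permuting tensor factors) also has an l-th root in B^G. -/
/-!
Pick `l`-th roots `r j` of the vectors `b j` of a `k`-basis of `A`. The monomials
`e f = ⊗ᵢ b (f i)` form a basis of `B` that `Σ_n` permutes, and the `z f = ⊗ᵢ r (f i)` are
`l`-th roots of them, permuted in the same way. The field `k` is perfect, since `ε` retracts `k → A`
and so transports `l`-th roots from `A` to `k`. Hence `∑ c_f e_f ↦ ∑ c_f^{1/l} z_f` is a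
well-defined `l`-th root operator on `B`; it commutes with every `ρ g`, so it preserves `B^G`.
-/

open scoped TensorProduct

/-- The subring of invariants of `B` under the action (through `ρ`) of the subgroup `G`. -/
def invariants {k B : Type*} [CommSemiring k] [CommRing B] [Algebra k B] {n : ℕ}
    (ρ : Equiv.Perm (Fin n) →* (B ≃ₐ[k] B)) (G : Subgroup (Equiv.Perm (Fin n))) :
    Subring B where
  carrier := {b | ∀ g ∈ G, ρ g b = b}
  mul_mem' := fun ha hb g hg => by rw [map_mul, ha g hg, hb g hg]
  one_mem' := fun g _ => map_one (ρ g)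
  add_mem' := fun ha hb g hg => by rw [map_add, ha g hg, hb g hg]
  zero_mem' := fun g _ => map_zero (ρ g)
  neg_mem' := fun ha g hg => by rw [map_neg, ha g hg]

namespace Module.Basis

variable {k B ι : Type*} [Field k] [CommRing B] [Algebra k B]
  (p : ℕ) [ExpChar k p] [PerfectRing k p]

/-- `∑ cᵢ eᵢ ↦ ∑ cᵢ^{1/p} zᵢ`; when `z i ^ p = e i` this is a `p`-th root operator. -/
noncomputable def frobeniusRoot (e : Basis ι k B) (z : ι → B) :
    B →ₛₗ[((frobeniusEquiv k p).symm : k →+* k)] B where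
  toFun x := (e.repr x).sum fun i c => (frobeniusEquiv k p).symm c • z i
  map_add' x y := by
    rw [map_add]
    exact Finsupp.sum_add_index' (fun i => by rw [map_zero, zero_smul])
      (fun i c d => by rw [map_add, add_smul])
  map_smul' c x := by
    rw [map_smul, Finsupp.sum_smul_index (fun i => by rw [map_zero, zero_smul]),
      Finsupp.smul_sum]
    exact Finsupp.sum_congr fun i _ => by rw [map_mul, mul_smul]; rfl

variable {p} (e : Basis ι k B) (z : ι → B)

@[simp]
theorem frobeniusRoot_apply_self (i : ι) : e.frobeniusRoot p z (e i) = z i := by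
  simp [frobeniusRoot, Finsupp.sum_single_index]

theorem frobeniusRoot_pow [ExpChar B p] (hz : ∀ i, z i ^ p = e i) (x : B) :
    e.frobeniusRoot p z x ^ p = x := by
  induction e.mem_span x using Submodule.span_induction with
  | mem y hy =>
    obtain ⟨i, rfl⟩ := hy
    rw [frobeniusRoot_apply_self, hz]
  | zero => rw [map_zero, zero_pow (expChar_pos k p).ne']
  | add y y' _ _ hy hy' => rw [map_add, add_pow_expChar, hy, hy']
  | smul c y _ hy =>
    rw [LinearMap.map_smulₛₗ, smul_pow, hy, RingHom.coe_coe, ← frobenius_def,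
      frobenius_apply_frobeniusEquiv_symm]

theorem map_frobeniusRoot (T : B →ₗ[k] B) (σ : ι → ι) (he : ∀ i, T (e i) = e (σ i))
    (hz : ∀ i, T (z i) = z (σ i)) (x : B) :
    T (e.frobeniusRoot p z x) = e.frobeniusRoot p z (T x) :=
  LinearMap.congr_fun (f := T.comp (e.frobeniusRoot p z)) (g := (e.frobeniusRoot p z).comp T)
    (e.ext fun i => by simp [he, hz]) x

end Module.Basis

theorem PerfectRing.of_algHom_of_forall_exists_pow_eq {k A : Type*} [Field k] [CommRing A]
    [Algebra k A] (p : ℕ) [ExpChar k p] (ε : A →ₐ[k] k) (hroots : ∀ a : A, ∃ b : A, b ^ p = a) :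
    PerfectRing k p :=
  PerfectRing.ofSurjective k p fun x => by
    obtain ⟨a, ha⟩ := hroots (algebraMap k A x)
    exact ⟨ε a, by
      rw [frobenius_def, ← map_pow, ha, AlgHom.commutes, Algebra.algebraMap_self_apply]⟩

theorem PiTensorProduct.tprod_pow {k ι A : Type*} [CommSemiring k] [CommSemiring A]
    [Algebra k A] (v : ι → A) (m : ℕ) : tprod k v ^ m = tprod k (v ^ m) :=
  (map_pow (tprodMonoidHom k) v m).symm

theorem stmt13_general (l n : ℕ) (hl : l.Prime) (k : Type*) [Field k] [CharP k l]
    (A : Type*) [CommRing A] [Algebra k A] (ε : A →ₐ[k] k)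
    (hroots : ∀ a : A, ∃ b : A, b ^ l = a)
    (G : Subgroup (Equiv.Perm (Fin n)))
    (ρ : Equiv.Perm (Fin n) →* ((⨂[k] _ : Fin n, A) ≃ₐ[k] ⨂[k] _ : Fin n, A))
    (hρ : ∀ (g : Equiv.Perm (Fin n)) (v : Fin n → A),
      ρ g (PiTensorProduct.tprod k v) = PiTensorProduct.tprod k fun i => v (g⁻¹ i)) :
    ∀ b ∈ invariants ρ G, ∃ c ∈ invariants ρ G, c ^ l = b := by
  have : Fact l.Prime := ⟨hl⟩
  have : Nontrivial A := ε.toRingHom.domain_nontrivial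
  have := PerfectRing.of_algHom_of_forall_exists_pow_eq l ε hroots
  let bA := Module.Basis.ofVectorSpace k A
  have := bA.index_nonempty
  choose r hr using fun j => hroots (bA j)
  let e := Basis.piTensorProduct fun _ : Fin n => bA
  let z : (Fin n → _) → ⨂[k] _ : Fin n, A := fun f => PiTensorProduct.tprod k fun i => r (f i)
  have : Nontrivial (⨂[k] _ : Fin n, A) := e.repr.toEquiv.nontrivial
  have := expChar_of_injective_algebraMap (algebraMap k (⨂[k] _ : Fin n, A)).injective l
  have hz (f) : z f ^ l = e f := by
    simp only [z, e, Basis.piTensorProduct_apply, PiTensorProduct.tprod_pow]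
    exact congrArg _ (funext fun i => hr (f i))
  intro b hb
  refine ⟨e.frobeniusRoot l z b, fun g hg => ?_, e.frobeniusRoot_pow z hz b⟩
  have hψ := e.map_frobeniusRoot (p := l) z (ρ g).toLinearMap (fun f i => f (g⁻¹ i))
    (fun f => by simp [e, hρ]) (fun f => hρ g _) b
  simpa only [AlgEquiv.toLinearMap_apply, hb g hg] using hψ

/-- Let `k` be a field of characteristic `l`, and `A` an augmented `k`-algebra in which every
element has an `l`-th root.  Let `G ⊆ Σ_n` be a subgroup of `l`-power order, acting on
`B = A^{⊗n}` by permuting the tensor factors (the action `ρ` is pinned down by its values on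
pure tensors).  Then every element of the invariant subring `B^G` has an `l`-th root in `B^G`. -/
theorem stmt13 (l n : ℕ) (hl : l.Prime) (k : Type*) [Field k] [CharP k l]
    (A : Type*) [CommRing A] [Algebra k A] (ε : A →ₐ[k] k)
    (hroots : ∀ a : A, ∃ b : A, b ^ l = a)
    (G : Subgroup (Equiv.Perm (Fin n))) (hG : IsPGroup l G)
    (ρ : Equiv.Perm (Fin n) →* ((⨂[k] _ : Fin n, A) ≃ₐ[k] ⨂[k] _ : Fin n, A))
    (hρ : ∀ (g : Equiv.Perm (Fin n)) (v : Fin n → A),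
      ρ g (PiTensorProduct.tprod k v) = PiTensorProduct.tprod k fun i => v (g⁻¹ i)) :
    ∀ b ∈ invariants ρ G, ∃ c ∈ invariants ρ G, c ^ l = b :=
  stmt13_general l n hl k A ε hroots G ρ hρ
end

section
/- Let k be a field of characteristic l, B a commutative augmented k-algebra with a G'-action (G ⊆ G' ⊆ Σ_n l-groups, B = A^{⊗n} with A having l-th roots of all elements), and suppose given a commutative square of augmented rings with surjections π' : R' → B^{G'} and π : R → B^G, f : R' → R, such that the kernel 𝔍_R of π satisfies 𝔍_R^N = 0 for some N. Then there is an integer M with I_R^M ⊆ I_{R'}·R, where I_R and I_{R'} are the augmentation ideals. -/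
/-!
Everything rests on the inclusion `I_{B^G} ⊆ I_{B^{G'}} · B^G`: given it,
`I_R ⊆ I_{R'} · R + ker π`, and `(ker π)^N = 0` gives `I_R^{N+1} ⊆ I_{R'} · R`.

An invariant `F` with `ε F = 0` is a root of `∏_{g ∈ G'} (X - g F)`, a monic polynomial over
`B^{G'}` whose lower coefficients have augmentation zero, so `F^m ∈ I_{B^{G'}} · B^G` once
`m ≥ |G'|`. Since every element of `A` is an `l`-th power, for `q = l^e` the monomial basis of
`B = A^{⊗n}` consists of `q`-th powers of tensors that `Σ_n` permutes along with the basis;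
in characteristic `l` each orbit sum of basis vectors is then the `q`-th power of the invariant
orbit sum of the roots, so every invariant is a `k`-combination of `q`-th powers of invariants.
Finally `F^q - (ε F)^q = (F - ε F)^q` puts every such combination of augmentation zero into
`I_{B^{G'}} · B^G`.
-/

open scoped TensorProduct

lemma invariants_antitone {k B : Type*} [CommSemiring k] [CommRing B] [Algebra k B] {n : ℕ}
    (ρ : Equiv.Perm (Fin n) →* (B ≃ₐ[k] B)) {G G' : Subgroup (Equiv.Perm (Fin n))}
    (h : G ≤ G') : invariants ρ G' ≤ invariants ρ G :=
  fun _ hb g hg => hb g (h hg)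

open Polynomial

theorem Ideal.comap_pow_succ_le_map_comap_of_ker_pow_eq_bot {R R' S S' : Type*} [CommRing R]
    [CommRing R'] [CommRing S] [CommRing S'] {π : R →+* S} {π' : R' →+* S'} {f : R' →+* R}
    {i : S' →+* S} (hπ : Function.Surjective π) (hπ' : Function.Surjective π')
    (hsq : i.comp π' = π.comp f) {I : Ideal S} {I' : Ideal S'} (hI : I ≤ I'.map i) {N : ℕ}
    (hnil : RingHom.ker π ^ N = ⊥) :
    I.comap π ^ (N + 1) ≤ (I'.comap π').map f := by
  set J := (I'.comap π').map f
  have hJ : I.comap π ≤ J ⊔ RingHom.ker π :=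
    calc I.comap π ≤ (I'.map i).comap π := Ideal.comap_mono hI
      _ = (J.map π).comap π := by
        rw [Ideal.map_map, ← hsq, ← Ideal.map_map, Ideal.map_comap_of_surjective _ hπ']
      _ = J ⊔ RingHom.ker π := Ideal.comap_map_of_surjective' π hπ J
  calc I.comap π ^ (N + 1) ≤ (J ⊔ RingHom.ker π) ^ (1 + N) := by
        rw [add_comm]; exact Ideal.pow_right_mono hJ _
    _ ≤ J ^ 1 ⊔ RingHom.ker π ^ N := Ideal.sup_pow_add_le_pow_sup_pow
    _ = J := by rw [hnil, pow_one, sup_bot_eq]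

section Invariants

variable {k B : Type*} [CommSemiring k] [CommRing B] [Algebra k B] {n : ℕ}
  (ρ : Equiv.Perm (Fin n) →* (B ≃ₐ[k] B))

theorem algebraMap_mem_invariants (G : Subgroup (Equiv.Perm (Fin n))) (c : k) :
    algebraMap k B c ∈ invariants ρ G :=
  fun g _ => (ρ g).commutes c

theorem pow_mem_map_ker_of_card_le {T : Type*} [CommRing T] {G G' : Subgroup (Equiv.Perm (Fin n))}
    (hGG' : G ≤ G') (ε : B →+* T) (hε : ∀ g ∈ G', ∀ b, ε (ρ g b) = ε b)
    (F : invariants ρ G) (hF : ε F = 0) {m : ℕ} (hm : Nat.card G' ≤ m) :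
    F ^ m ∈ Ideal.map (Subring.inclusion (invariants_antitone ρ hGG'))
      (RingHom.ker (ε.comp (invariants ρ G').subtype)) := by
  classical
  have := Fintype.ofFinite G'
  let _ := (Subring.inclusion (invariants_antitone ρ hGG')).toAlgebra
  set P : B[X] := ∏ g : G', (X - C (ρ g (F : B)))
  have hmonic : P.Monic := monic_prod_of_monic _ _ fun g _ => monic_X_sub_C _
  have hdeg : P.natDegree ≤ Nat.card G' :=
    (natDegree_prod_le _ _).trans <| (Finset.sum_le_card_nsmul _ _ 1 fun g _ =>
      natDegree_X_sub_C_le _).trans (by simp [Nat.card_eq_fintype_card])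
  have hinv : ∀ j, P.coeff j ∈ invariants ρ G' := by
    intro j g hg
    have : P.map (ρ g : B →+* B) = P := by
      simp only [P, Polynomial.map_prod, Polynomial.map_sub, map_X, map_C]
      exact Fintype.prod_equiv (Equiv.mulLeft ⟨g, hg⟩) _ _ fun h => by simp
    simpa using congrArg (coeff · j) this
  have hε0 : P.map ε = X ^ Nat.card G' := by
    simp [P, Polynomial.map_prod, hε _ (Subtype.prop _), hF, Nat.card_eq_fintype_card]
  have hlifts : P ∈ lifts (invariants ρ G').subtype :=
    (lifts_iff_coeff_lifts P).2 fun j => ⟨⟨_, hinv j⟩, rfl⟩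
  obtain ⟨Q, hQP, hQdeg, hQ⟩ := lifts_and_natDegree_eq_and_monic hlifts hmonic
  have hEis : Q.IsWeaklyEisensteinAt (RingHom.ker (ε.comp (invariants ρ G').subtype)) := by
    constructor
    intro j hj
    have := congrArg (coeff · j) hε0
    simp only [← hQP, Polynomial.map_map, coeff_map, coeff_X_pow] at this
    rw [RingHom.mem_ker, this, if_neg (by omega)]
  have hroot : aeval F Q = 0 := by
    apply Subtype.val_injective
    have := congrArg (eval (F : B)) hQP
    rw [eval_map] at this
    change (invariants ρ G).subtype (eval₂ _ F Q) = 0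
    rw [hom_eval₂]
    refine this.trans ?_
    simpa [P, eval_prod] using Finset.prod_eq_zero (Finset.mem_univ 1) (by simp)
  have hdeg' : (Q.map (algebraMap _ (invariants ρ G))).natDegree ≤ m :=
    natDegree_map_le.trans (hQdeg.trans_le (hdeg.trans hm))
  exact hEis.pow_natDegree_le_of_aeval_zero_of_monic_mem_map hroot hQ m hdeg'

end Invariants

section Basis

variable {k B α : Type*} [CommSemiring k] [CommRing B] [Algebra k B] {n : ℕ}
  (ρ : Equiv.Perm (Fin n) →* (B ≃ₐ[k] B)) [MulAction (Equiv.Perm (Fin n)) α]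

theorem repr_apply_smul_of_permutes_basis (bB : Module.Basis α k B)
    (hb : ∀ g a, ρ g (bB a) = bB (g • a)) (g : Equiv.Perm (Fin n)) (y : B) (a : α) :
    bB.repr (ρ g y) (g • a) = bB.repr y a := by
  have : bB.coord (g • a) ∘ₗ (ρ g).toLinearMap = bB.coord a := bB.ext fun b => by
    simp [hb, Finsupp.single_apply_left (MulAction.injective g)]
  exact LinearMap.congr_fun this y

theorem sum_mem_invariants_of_smul_mem {G : Subgroup (Equiv.Perm (Fin n))} (r : α → B)
    (hr : ∀ g a, ρ g (r a) = r (g • a)) {t : Finset α}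
    (ht : ∀ g ∈ G, ∀ a ∈ t, g • a ∈ t) :
    ∑ a ∈ t, r a ∈ invariants ρ G := by
  intro g hg
  rw [map_sum]
  refine Finset.sum_equiv (MulAction.toPerm g) (fun a => ⟨ht g hg a, fun h => ?_⟩)
    fun a _ => hr g a
  simpa using ht g⁻¹ (inv_mem hg) _ h

variable {p : ℕ} [Fact p.Prime] [CharP B p]

theorem mem_span_pow_of_permutes_basis (G : Subgroup (Equiv.Perm (Fin n)))
    (bB : Module.Basis α k B) (r : α → B) (e : ℕ) (hrb : ∀ a, r a ^ p ^ e = bB a)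
    (hr : ∀ g a, ρ g (r a) = r (g • a))
    {x : B} (hx : x ∈ invariants ρ G) :
    x ∈ Submodule.span k (Set.range fun F : invariants ρ G => (F : B) ^ p ^ e) := by
  classical
  have hb g a : ρ g (bB a) = bB (g • a) := by rw [← hrb, map_pow, hr, hrb]
  set c := bB.repr x
  have hc : ∀ g ∈ G, ∀ a, c (g • a) = c a := fun g hg a => by
    rw [← repr_apply_smul_of_permutes_basis ρ bB hb g x a, hx g hg]
  have hx' : x = ∑ a ∈ c.support, c a • bB a := (bB.linearCombination_repr x).symm
  rw [hx', Finset.sum_partition (MulAction.orbitRel G α)]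
  refine Submodule.sum_mem _ fun ξ hξ => ?_
  obtain ⟨w, hw, rfl⟩ := Finset.mem_image.1 hξ
  set t := {a ∈ c.support | Quotient.mk (MulAction.orbitRel G α) a = ⟦w⟧}
  have horbit : ∀ a ∈ t, ∃ g ∈ G, g • w = a := fun a ha => by
    obtain ⟨g, hg⟩ := MulAction.orbitRel_apply.1 (Quotient.exact (Finset.mem_filter.1 ha).2)
    exact ⟨g, g.2, hg⟩
  have ht : ∀ g ∈ G, ∀ a ∈ t, g • a ∈ t := fun g hg a ha => by
    obtain ⟨ha, haw⟩ := Finset.mem_filter.1 ha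
    refine Finset.mem_filter.2 ⟨by simpa [hc g hg] using ha, haw ▸ Quotient.sound ?_⟩
    exact MulAction.orbitRel_apply.2 (MulAction.mem_orbit a (⟨g, hg⟩ : G))
  have hsum : ∑ a ∈ t, c a • bB a = c w • (∑ a ∈ t, r a) ^ p ^ e := by
    rw [sum_pow_char_pow, Finset.smul_sum]
    refine Finset.sum_congr rfl fun a ha => ?_
    obtain ⟨g, hg, rfl⟩ := horbit a ha
    rw [hc g hg, hrb]
  rw [hsum]
  exact Submodule.smul_mem _ _ (Submodule.subset_span
    ⟨⟨_, sum_mem_invariants_of_smul_mem ρ r hr ht⟩, rfl⟩)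

end Basis

section TensorPower

open PiTensorProduct

variable {k A : Type*} [Field k] [CommRing A] [Algebra k A] {n : ℕ}
  (ρ : Equiv.Perm (Fin n) →* ((⨂[k] _ : Fin n, A) ≃ₐ[k] ⨂[k] _ : Fin n, A))

theorem apply_perm_eq_of_apply_tprod_eq_prod
    (hρ : ∀ g v, ρ g (tprod k v) = tprod k fun i => v (g⁻¹ i))
    (εB : (⨂[k] _ : Fin n, A) →ₐ[k] k) (ε : A → k)
    (hεB : ∀ v, εB (tprod k v) = ∏ i, ε (v i))
    (g : Equiv.Perm (Fin n)) (x : ⨂[k] _ : Fin n, A) : εB (ρ g x) = εB x := by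
  induction x using PiTensorProduct.induction_on with
  | smul_tprod c v =>
    rw [map_smul, map_smul, map_smul, hρ, hεB, hεB, Equiv.prod_comp g⁻¹ fun i => ε (v i)]
  | add x y hx hy => rw [map_add, map_add, map_add, hx, hy]

theorem mem_span_pow_of_mem_invariants {p : ℕ} [Fact p.Prime] [CharP (⨂[k] _ : Fin n, A) p]
    (hρ : ∀ g v, ρ g (tprod k v) = tprod k fun i => v (g⁻¹ i)) {e : ℕ}
    (hroots : ∀ a : A, ∃ b, b ^ p ^ e = a) (G : Subgroup (Equiv.Perm (Fin n)))
    {x : ⨂[k] _ : Fin n, A} (hx : x ∈ invariants ρ G) :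
    x ∈ Submodule.span k
      (Set.range fun F : invariants ρ G => (F : ⨂[k] _ : Fin n, A) ^ p ^ e) := by
  let b := Module.Basis.ofVectorSpace k A
  let _ : MulAction (Equiv.Perm (Fin n)) (Fin n → Module.Basis.ofVectorSpaceIndex k A) :=
    arrowAction
  choose root hroot using hroots
  refine mem_span_pow_of_permutes_basis ρ G (Basis.piTensorProduct fun _ => b)
    (fun w => tprod k fun i => root (b (w i))) e (fun w => ?_) (fun g w => hρ g _) hx
  rw [← tprodMonoidHom_apply, ← map_pow, Basis.piTensorProduct_apply]
  exact congrArg _ (funext fun i => hroot _)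

theorem ker_comp_subtype_le_map_ker {l : ℕ} (hl : l.Prime) [CharP k l]
    (hroots : ∀ a : A, ∃ b, b ^ l = a)
    (hρ : ∀ g v, ρ g (tprod k v) = tprod k fun i => v (g⁻¹ i))
    (εB : (⨂[k] _ : Fin n, A) →ₐ[k] k) (ε : A → k)
    (hεB : ∀ v, εB (tprod k v) = ∏ i, ε (v i))
    {G G' : Subgroup (Equiv.Perm (Fin n))} (hGG' : G ≤ G') :
    RingHom.ker (εB.toRingHom.comp (invariants ρ G).subtype) ≤
      Ideal.map (Subring.inclusion (invariants_antitone ρ hGG'))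
        (RingHom.ker (εB.toRingHom.comp (invariants ρ G').subtype)) := by
  have := Fact.mk hl
  have := εB.domain_nontrivial
  have := charP_of_injective_algebraMap' k (A := ⨂[k] _ : Fin n, A) l
  set J := Ideal.map (Subring.inclusion (invariants_antitone ρ hGG'))
    (RingHom.ker (εB.toRingHom.comp (invariants ρ G').subtype))
  have hq : Nat.card G' ≤ l ^ Nat.card G' := (Nat.lt_pow_self hl.one_lt).le
  have hroots' : Function.Surjective fun a : A => a ^ l ^ Nat.card G' := by
    simpa [pow_iterate] using (show Function.Surjective (· ^ l) from hroots).iterate (Nat.card G')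
  have key : ∀ y ∈ Submodule.span k
      (Set.range fun F : invariants ρ G => (F : ⨂[k] _ : Fin n, A) ^ l ^ Nat.card G'),
      ∃ z ∈ J, (z : ⨂[k] _ : Fin n, A) = y - algebraMap k _ (εB y) := by
    intro y hy
    induction hy using Submodule.span_induction with
    | mem _ hy =>
      obtain ⟨F, rfl⟩ := hy
      let c : invariants ρ G := ⟨_, algebraMap_mem_invariants ρ G (εB F)⟩
      refine ⟨(F - c) ^ l ^ Nat.card G', pow_mem_map_ker_of_card_le ρ hGG' εB.toRingHom
        (fun g _ => apply_perm_eq_of_apply_tprod_eq_prod ρ hρ εB ε hεB g) _ ?_ hq, ?_⟩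
      · simp [c]
      · simp [c, sub_pow_char_pow]
    | zero => exact ⟨0, J.zero_mem, by simp⟩
    | add y y' _ _ hy hy' =>
      obtain ⟨z, hz, hzy⟩ := hy
      obtain ⟨z', hz', hzy'⟩ := hy'
      exact ⟨z + z', J.add_mem hz hz', by
        simp only [Subring.coe_add, hzy, hzy', map_add]; ring⟩
    | smul a y _ hy =>
      obtain ⟨z, hz, hzy⟩ := hy
      refine ⟨⟨_, algebraMap_mem_invariants ρ G a⟩ * z, J.mul_mem_left _ hz, ?_⟩
      simp only [Subring.coe_mul, hzy, Algebra.smul_def, map_mul, AlgHom.commutes,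
        Algebra.algebraMap_self, RingHom.id_apply]
      ring
  intro x hx
  obtain ⟨z, hz, hzx⟩ := key x (mem_span_pow_of_mem_invariants ρ hρ hroots' G x.2)
  have hεx : εB x = 0 := hx
  rwa [show x = z from Subtype.ext (by rw [hzx, hεx, map_zero, sub_zero])]

end TensorPower

theorem stmt15_general (l n : ℕ) (hl : l.Prime) (k : Type*) [Field k] [CharP k l]
    (A : Type*) [CommRing A] [Algebra k A] (ε : A →ₐ[k] k)
    (hroots : ∀ a : A, ∃ b : A, b ^ l = a)
    (G G' : Subgroup (Equiv.Perm (Fin n))) (hGG' : G ≤ G')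
    (ρ : Equiv.Perm (Fin n) →* ((⨂[k] _ : Fin n, A) ≃ₐ[k] ⨂[k] _ : Fin n, A))
    (hρ : ∀ (g : Equiv.Perm (Fin n)) (v : Fin n → A),
      ρ g (PiTensorProduct.tprod k v) = PiTensorProduct.tprod k fun i => v (g⁻¹ i))
    (εB : (⨂[k] _ : Fin n, A) →ₐ[k] k)
    (hεB : ∀ v : Fin n → A, εB (PiTensorProduct.tprod k v) = ∏ i, ε (v i))
    (R R' : Type*) [CommRing R] [CommRing R']
    (εR : R →+* k) (εR' : R' →+* k)
    (π : R →+* ↥(invariants ρ G)) (π' : R' →+* ↥(invariants ρ G')) (f : R' →+* R)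
    (hπ : Function.Surjective π) (hπ' : Function.Surjective π')
    (hsq : (Subring.inclusion (invariants_antitone ρ hGG')).comp π' = π.comp f)
    (hεR : (εB.toRingHom.comp (invariants ρ G).subtype).comp π = εR)
    (hεR' : (εB.toRingHom.comp (invariants ρ G').subtype).comp π' = εR')
    (N : ℕ) (hnil : (RingHom.ker π) ^ N = ⊥) :
    ∃ M : ℕ, (RingHom.ker εR) ^ M ≤ Ideal.map f (RingHom.ker εR') := by
  refine ⟨N + 1, ?_⟩
  rw [← hεR, ← hεR', ← RingHom.comap_ker, ← RingHom.comap_ker]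
  exact Ideal.comap_pow_succ_le_map_comap_of_ker_pow_eq_bot hπ hπ' hsq
    (ker_comp_subtype_le_map_ker ρ hl hroots hρ εB ε hεB hGG') hnil

/-- Let `k` be a field of characteristic `l`, `B = A^{⊗n}` with the permutation action of
`l`-groups `G ⊆ G' ⊆ Σ_n` (with `A` having `l`-th roots of all elements), and suppose given a
commutative square of augmented rings with surjections `π' : R' → B^{G'}` and `π : R → B^G`,
`f : R' → R`, compatible with the augmentations, such that the kernel of `π` is nilpotent.
Then there is an integer `M` with `I_R^M ⊆ I_{R'}·R`, where `I_R`, `I_{R'}` are the augmentation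
ideals. -/
theorem stmt15 (l n : ℕ) (hl : l.Prime) (k : Type*) [Field k] [CharP k l]
    (A : Type*) [CommRing A] [Algebra k A] (ε : A →ₐ[k] k)
    (hroots : ∀ a : A, ∃ b : A, b ^ l = a)
    (G G' : Subgroup (Equiv.Perm (Fin n))) (hGG' : G ≤ G')
    (hG : IsPGroup l G) (hG' : IsPGroup l G')
    (ρ : Equiv.Perm (Fin n) →* ((⨂[k] _ : Fin n, A) ≃ₐ[k] ⨂[k] _ : Fin n, A))
    (hρ : ∀ (g : Equiv.Perm (Fin n)) (v : Fin n → A),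
      ρ g (PiTensorProduct.tprod k v) = PiTensorProduct.tprod k fun i => v (g⁻¹ i))
    (εB : (⨂[k] _ : Fin n, A) →ₐ[k] k)
    (hεB : ∀ v : Fin n → A, εB (PiTensorProduct.tprod k v) = ∏ i, ε (v i))
    (R R' : Type*) [CommRing R] [CommRing R']
    (εR : R →+* k) (εR' : R' →+* k)
    (π : R →+* ↥(invariants ρ G)) (π' : R' →+* ↥(invariants ρ G')) (f : R' →+* R)
    (hπ : Function.Surjective π) (hπ' : Function.Surjective π')
    (hsq : (Subring.inclusion (invariants_antitone ρ hGG')).comp π' = π.comp f)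
    (hεR : (εB.toRingHom.comp (invariants ρ G).subtype).comp π = εR)
    (hεR' : (εB.toRingHom.comp (invariants ρ G').subtype).comp π' = εR')
    (N : ℕ) (hN : 0 < N) (hnil : (RingHom.ker π) ^ N = ⊥) :
    ∃ M : ℕ, (RingHom.ker εR) ^ M ≤ Ideal.map f (RingHom.ker εR') :=
  stmt15_general l n hl k A ε hroots G G' hGG' ρ hρ εB hεB R R' εR εR' π π' f hπ hπ' hsq hεR hεR' N
    hnil
end

section
/- Let G be a finite l-group. Then the intersection ⋂_n ((l) + I_G)^n of the powers of the ideal (l) + I_G in the representation ring R[G] is the zero ideal; equivalently, R[G] ⊗ 𝔽_l is complete with respect to its augmentation ideal topology. -/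
set_option synthInstance.maxHeartbeats 1000000
set_option maxHeartbeats 1000000

/-- The representation ring `R[G]` of a finite group `G` (over `ℂ`), realized as the character
ring: the subring of the function ring `G → ℂ` generated by the characters of all
finite-dimensional representations. -/
noncomputable def charRing (G : Type) [Group G] : Subring (G → ℂ) :=
  Subring.closure (Set.range fun V : FDRep ℂ G => V.character)

/-- The augmentation (dimension) ideal `I_G ⊆ R[G]`: the kernel of evaluation at the identity. -/
noncomputable def augIdeal (G : Type) [Group G] : Ideal ↥(charRing G) :=
  RingHom.ker ((Pi.evalRingHom (fun _ : G => ℂ) (1 : G)).comp (charRing G).subtype)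

/-! Fix `g ∈ G` with `g ^ (l ^ k) = 1` and a primitive `l ^ k`-th root of unity `ζ`. Evaluation at
`g` maps `R[G]` into the noetherian domain `ℤ[ζ]`, and `χ_V(g)` is a sum of `dim V` powers of `ζ`.
Since `Φ_{l^k}(1) ≡ 0 mod l`, there is a ring map `ℤ[ζ] → 𝔽_l` with `ζ ↦ 1`; it sends `χ(g)` to
`χ(1) mod l`, hence kills the image of `(l) + I_G`. Krull's intersection theorem for its (proper)
kernel then forces `x(g) = 0` for every `x ∈ ⋂ₙ ((l) + I_G)ⁿ`. -/

open Polynomial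

theorem Subring.closure_closure_coe_preimage {R : Type*} [Ring R] {s : Set R} :
    closure (((↑) : closure s → R) ⁻¹' s) = ⊤ :=
  eq_top_iff.2 fun x _ ↦ Subtype.recOn x fun _ hx' ↦
    closure_induction (fun _ h ↦ subset_closure h) (zero_mem _) (one_mem _)
      (fun _ _ _ _ ↦ add_mem) (fun _ _ ↦ neg_mem) (fun _ _ _ _ ↦ mul_mem) hx'

theorem RingHom.map_eq_zero_of_mem_iInf_pow {R S T : Type*} [CommRing R] [CommRing S]
    [IsNoetherianRing S] [IsDomain S] [Semiring T] [Nontrivial T] (φ : R →+* S) (ψ : S →+* T)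
    {J : Ideal R} (hJ : J ≤ RingHom.ker (ψ.comp φ)) {x : R} (hx : x ∈ ⨅ n, J ^ n) :
    φ x = 0 := by
  have hJQ : J.map φ ≤ RingHom.ker ψ := by
    rwa [Ideal.map_le_iff_le_comap, RingHom.comap_ker]
  have hxQ : φ x ∈ ⨅ n, RingHom.ker ψ ^ n := Ideal.mem_iInf.2 fun n ↦ by
    refine Ideal.pow_right_mono hJQ n ?_
    rw [← Ideal.map_pow]
    exact Ideal.mem_map_of_mem φ (Ideal.mem_iInf.1 hx n)
  rwa [Ideal.iInf_pow_eq_bot_of_isDomain _ (RingHom.ker_ne_top ψ)] at hxQ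

theorem Module.End.pow_eq_one_of_hasEigenvalue {K V : Type*} [Field K] [AddCommGroup V]
    [Module K V] {f : Module.End K V} {d : ℕ} (hf : f ^ d = 1) {μ : K} (hμ : f.HasEigenvalue μ) :
    μ ^ d = 1 := by
  obtain ⟨v, hv⟩ := (hμ.pow d).exists_hasEigenvector
  have := hv.apply_eq_smul
  rw [hf, Module.End.one_apply] at this
  exact (smul_left_injective K hv.2).eq_iff.1 (by simpa using this.symm)

theorem Module.End.exists_trace_eq_sum_pow {K V : Type*} [Field K] [IsAlgClosed K]
    [AddCommGroup V] [Module K V] [FiniteDimensional K V] {f : Module.End K V} {d : ℕ}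
    [NeZero d] (hf : f ^ d = 1) {ζ : K} (hζ : IsPrimitiveRoot ζ d) :
    ∃ s : Multiset ℕ, Multiset.card s = Module.finrank K V ∧
      LinearMap.trace K V f = (s.map (ζ ^ ·)).sum := by
  have hroots : ∀ μ ∈ f.charpoly.roots, ∃ j : ℕ, ζ ^ j = μ := fun μ hμ ↦ by
    have : f.HasEigenvalue μ :=
      (hasEigenvalue_iff_isRoot_charpoly f μ).2 (mem_roots'.1 hμ).2
    obtain ⟨j, -, hj⟩ := hζ.eq_pow_of_pow_eq_one (pow_eq_one_of_hasEigenvalue hf this)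
    exact ⟨j, hj⟩
  obtain ⟨s, hs⟩ : ∃ s : Multiset ℕ, s.map (ζ ^ ·) = f.charpoly.roots := by
    choose! j hj using hroots
    refine ⟨f.charpoly.roots.map j, ?_⟩
    rw [Multiset.map_map]
    exact (Multiset.map_congr rfl hj).trans (Multiset.map_id _)
  refine ⟨s, ?_, ?_⟩
  · rw [← Multiset.card_map (ζ ^ ·), hs, ← (IsAlgClosed.splits f.charpoly).natDegree_eq_card_roots,
      LinearMap.charpoly_natDegree]
  · rw [hs, trace_eq_sum_roots_charpoly_of_splits (IsAlgClosed.splits _)]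

instance Algebra.adjoin_singleton_isNoetherianRing {R A : Type*} [CommRing R] [IsNoetherianRing R]
    [CommRing A] [Algebra R A] (x : A) : IsNoetherianRing (Algebra.adjoin R {x}) :=
  isNoetherianRing_of_fg ⟨{x}, by simp⟩

theorem IsPrimitiveRoot.exists_ringHom_adjoin_zmod_eq_one {K : Type*} [Field K] [CharZero K]
    {p k : ℕ} [Fact p.Prime] {ζ : K} (hζ : IsPrimitiveRoot ζ (p ^ k)) :
    ∃ ψ : Algebra.adjoin ℤ {ζ} →+* ZMod p,
      ψ ⟨ζ, Algebra.self_mem_adjoin_singleton ℤ ζ⟩ = 1 := by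
  have hpk : 0 < p ^ k := pow_pos (Fact.out : p.Prime).pos k
  have hint := hζ.isIntegral hpk
  have hroot : (minpoly ℤ ζ).eval₂ (Int.castRingHom (ZMod p)) 1 = 0 := by
    rw [← cyclotomic_eq_minpoly hζ hpk, eval₂_at_one]
    cases k with
    | zero => simp
    | succ k => simp [eval_one_cyclotomic_prime_pow]
  refine ⟨(AdjoinRoot.lift _ 1 hroot).comp (minpoly.equivAdjoin hint).symm.toRingHom, ?_⟩
  have : (minpoly.equivAdjoin hint).symm ⟨ζ, Algebra.self_mem_adjoin_singleton ℤ ζ⟩ =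
      AdjoinRoot.root _ :=
    (AlgEquiv.symm_apply_eq _).2 (by ext; simp)
  simp [this]

namespace charRing

variable {G : Type} [Group G] {g : G} {d : ℕ} [NeZero d] {ζ : ℂ}

theorem exists_character_eq_sum_pow (hg : g ^ d = 1) (hζ : IsPrimitiveRoot ζ d)
    (V : FDRep ℂ G) :
    ∃ s : Multiset ℕ, Multiset.card s = Module.finrank ℂ V ∧
      V.character g = (s.map (ζ ^ ·)).sum :=
  Module.End.exists_trace_eq_sum_pow (by rw [← map_pow, hg, map_one]) hζ

theorem mem_adjoin_of_mem (hg : g ^ d = 1) (hζ : IsPrimitiveRoot ζ d) {x : G → ℂ}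
    (hx : x ∈ charRing G) : x g ∈ Algebra.adjoin ℤ {ζ} := by
  suffices charRing G ≤ (Algebra.adjoin ℤ {ζ}).toSubring.comap (Pi.evalRingHom _ g) from this hx
  refine Subring.closure_le.2 ?_
  rintro _ ⟨V, rfl⟩
  obtain ⟨s, -, hs⟩ := exists_character_eq_sum_pow hg hζ V
  show V.character g ∈ Algebra.adjoin ℤ {ζ}
  rw [hs]
  exact multiset_sum_mem _ <| Multiset.forall_mem_map_iff.2 fun j _ ↦
    pow_mem (Algebra.self_mem_adjoin_singleton ℤ ζ) j

noncomputable def evalAt (hg : g ^ d = 1) (hζ : IsPrimitiveRoot ζ d) :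
    charRing G →+* Algebra.adjoin ℤ {ζ} :=
  ((Pi.evalRingHom _ g).comp (charRing G).subtype).codRestrict _
    fun x ↦ mem_adjoin_of_mem hg hζ x.2

theorem map_evalAt_character {T : Type*} [Semiring T] (ψ : Algebra.adjoin ℤ {ζ} →+* T)
    (hψ : ψ ⟨ζ, Algebra.self_mem_adjoin_singleton ℤ ζ⟩ = 1) (hg : g ^ d = 1)
    (hζ : IsPrimitiveRoot ζ d) (V : FDRep ℂ G) :
    ψ (evalAt hg hζ ⟨V.character, Subring.subset_closure ⟨V, rfl⟩⟩) = Module.finrank ℂ V := by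
  obtain ⟨s, hcard, hs⟩ := exists_character_eq_sum_pow hg hζ V
  have : evalAt hg hζ ⟨V.character, Subring.subset_closure ⟨V, rfl⟩⟩ =
      (s.map (⟨ζ, Algebra.self_mem_adjoin_singleton ℤ ζ⟩ ^ ·)).sum := by
    ext
    exact hs.trans (by simp)
  simp only [this, map_multiset_sum, Multiset.map_map, Function.comp_def, map_pow, hψ, one_pow,
    Multiset.map_const', Multiset.sum_replicate, nsmul_one, hcard]

theorem comp_evalAt_eq_comp_evalAt_one {T : Type*} [Semiring T]
    (ψ : Algebra.adjoin ℤ {ζ} →+* T) (hψ : ψ ⟨ζ, Algebra.self_mem_adjoin_singleton ℤ ζ⟩ = 1)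
    (hg : g ^ d = 1) (hζ : IsPrimitiveRoot ζ d) :
    ψ.comp (evalAt hg hζ) = ψ.comp (evalAt (one_pow d) hζ) := by
  refine RingHom.eq_of_eqOn_set_dense Subring.closure_closure_coe_preimage ?_
  rintro ⟨_, hx⟩ ⟨V, rfl⟩
  exact (map_evalAt_character ψ hψ hg hζ V).trans (map_evalAt_character ψ hψ (one_pow d) hζ V).symm

theorem le_ker_comp_evalAt {l : ℕ} {T : Type*} [Semiring T] [CharP T l]
    (ψ : Algebra.adjoin ℤ {ζ} →+* T) (hψ : ψ ⟨ζ, Algebra.self_mem_adjoin_singleton ℤ ζ⟩ = 1)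
    (hg : g ^ d = 1) (hζ : IsPrimitiveRoot ζ d) :
    Ideal.span {(l : charRing G)} ⊔ augIdeal G ≤ RingHom.ker (ψ.comp (evalAt hg hζ)) := by
  refine sup_le ((Ideal.span_singleton_le_iff_mem _).2 ?_) fun x hx ↦ ?_
  · simp [RingHom.mem_ker]
  · rw [RingHom.mem_ker, comp_evalAt_eq_comp_evalAt_one ψ hψ, RingHom.comp_apply]
    have : evalAt (one_pow d) hζ x = 0 := Subtype.ext (RingHom.mem_ker.1 hx)
    rw [this, map_zero]

end charRing

theorem stmt19_general (l : ℕ) (hl : l.Prime) (G : Type) [Group G]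
    (hG : IsPGroup l G) :
    (⨅ n : ℕ, (Ideal.span {((l : ℕ) : ↥(charRing G))} ⊔ augIdeal G) ^ n : Ideal ↥(charRing G)) = ⊥ := by
  have : Fact l.Prime := ⟨hl⟩
  refine eq_bot_iff.2 fun x hx ↦ Subtype.ext <| funext fun g ↦ ?_
  obtain ⟨k, hk⟩ := hG g
  have : NeZero (l ^ k) := ⟨pow_ne_zero k hl.ne_zero⟩
  have hζ := Complex.isPrimitiveRoot_exp (l ^ k) (NeZero.ne _)
  obtain ⟨ψ, hψ⟩ := hζ.exists_ringHom_adjoin_zmod_eq_one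
  exact congrArg Subtype.val <| RingHom.map_eq_zero_of_mem_iInf_pow _ ψ
    (charRing.le_ker_comp_evalAt ψ hψ hk hζ) hx

/-- Let `G` be a finite `l`-group.  Then the intersection `⋂_n ((l) + I_G)^n` of the powers of
the ideal `(l) + I_G` in the representation ring `R[G]` is the zero ideal. -/
theorem stmt19 (l : ℕ) (hl : l.Prime) (G : Type) [Group G] [Finite G]
    (hG : IsPGroup l G) :
    (⨅ n : ℕ, (Ideal.span {((l : ℕ) : ↥(charRing G))} ⊔ augIdeal G) ^ n : Ideal ↥(charRing G)) = ⊥ :=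
  stmt19_general l hl G hG
end
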